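/- arXiv:2110.07135 — 4 statements merged into one kernel-verified Lean document; each statement's English description precedes it below -/
import Mathlib

section
/- Let Φ be a nice Young function and let Ψ(v) = sup_{u≥0}(u·v − Φ(u)) be its complementary function (which is again a nice Young function). Let K_N(x) = Σ_{|n|≤N}(1 − |n|/N)e^{2πinx} be the Fejér kernel on 𝕋. Then for all sufficiently large N (depending on Φ), the Orlicz norm of the Fejér kernel satisfies ‖K_N‖_Ψ ≤ 2·Φ⁻¹(N). -/
open Filter MeasureTheory Set Topology

noncomputable section

/-- The Luxemburg (Orlicz) norm of a real-valued function on the circle,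
realized as a `1`-periodic integral over `(0,1)`. -/
def luxNorm (Φ : ℝ → ℝ) (f : ℝ → ℝ) : ℝ :=
  sInf {k : ℝ | 0 < k ∧ (∫ x in (0:ℝ)..1, Φ (|f x| / k)) ≤ 1}

/-- The Luxemburg (Orlicz) norm of a complex-valued function on the circle. -/
def luxNormC (Φ : ℝ → ℝ) (f : ℝ → ℂ) : ℝ :=
  luxNorm Φ (fun x => ‖f x‖)

/-- A nice Young function: convex on `[0,∞)`, vanishing exactly at `0`, continuous,
with `Φ(u)/u → 0` at `0⁺` and `Φ(u)/u → ∞` at `∞`. -/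
def IsNiceYoung (Φ : ℝ → ℝ) : Prop :=
  ConvexOn ℝ (Ici 0) Φ ∧ Φ 0 = 0 ∧ ContinuousOn Φ (Ici 0) ∧
  (∀ u : ℝ, 0 ≤ u → (Φ u = 0 ↔ u = 0)) ∧
  Tendsto (fun u => Φ u / u) (nhdsWithin 0 (Ioi 0)) (nhds 0) ∧
  Tendsto (fun u => Φ u / u) atTop atTop

/-- `M^∞(t,Φ) = limsup_{u→∞} Φ(tu)/Φ(u)`. -/
def MInfty (Φ : ℝ → ℝ) (t : ℝ) : ℝ :=
  Filter.limsup (fun u => Φ (t * u) / Φ u) atTop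

/-- The Matuszewska–Orlicz index `α_Φ^∞ = lim_{t→0⁺} log M^∞(t,Φ) / log t`. -/
def alphaInfty (Φ : ℝ → ℝ) : ℝ :=
  limUnder (nhdsWithin (0:ℝ) (Ioi 0)) (fun t => Real.log (MInfty Φ t) / Real.log t)

/-- The Matuszewska–Orlicz index `β_Φ^∞ = lim_{t→∞} log M^∞(t,Φ) / log t`. -/
def betaInfty (Φ : ℝ → ℝ) : ℝ :=
  limUnder atTop (fun t => Real.log (MInfty Φ t) / Real.log t)

/-- The Δ₂ condition (for large arguments). -/
def Delta2 (Φ : ℝ → ℝ) : Prop :=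
  ∃ K₁ : ℝ, 0 < K₁ ∧ ∃ u₁ : ℝ, 0 ≤ u₁ ∧ ∀ u : ℝ, u₁ ≤ u → Φ (2 * u) ≤ K₁ * Φ u

/-- The ∇₂ condition (for large arguments). -/
def Nabla2 (Φ : ℝ → ℝ) : Prop :=
  ∃ K₂ : ℝ, 2 < K₂ ∧ ∃ u₂ : ℝ, 0 ≤ u₂ ∧ ∀ u : ℝ, u₂ ≤ u → K₂ * Φ u ≤ Φ (2 * u)

/-- The (generalized) inverse of a Young function. -/
def youngInv (Φ : ℝ → ℝ) (u : ℝ) : ℝ :=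
  sInf {v : ℝ | 0 ≤ v ∧ u ≤ Φ v}

/-- The trigonometric polynomial `x ↦ Σₙ aₙ e^{2πinx}` with finitely supported
coefficients `a : ℤ →₀ ℂ`. -/
def trigSum (a : ℤ →₀ ℂ) (x : ℝ) : ℂ :=
  ∑ n ∈ a.support, a n * Complex.exp (2 * (Real.pi : ℂ) * Complex.I * (n : ℂ) * (x : ℂ))

/-- `S ⊆ ℤ` is a `Λ(Φ)`-set. -/
def IsLambdaSet (Φ : ℝ → ℝ) (S : Set ℤ) : Prop :=
  ∃ Φ₁ : ℝ → ℝ, IsNiceYoung Φ₁ ∧ betaInfty Φ₁ < alphaInfty Φ ∧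
    ∃ C₀ : ℝ, ∀ a : ℤ →₀ ℂ, (a.support : Set ℤ) ⊆ S →
      luxNormC Φ (trigSum a) ≤ C₀ * luxNormC Φ₁ (trigSum a)

/-- `K_Φ(A)`: the best constant for `ℓ²`-normalized trigonometric polynomials with
frequencies in the finite set `A`. -/
def Kconst (Φ : ℝ → ℝ) (A : Finset ℤ) : ℝ :=
  sSup {r : ℝ | ∃ a : ℤ → ℂ, (∑ n ∈ A, ‖a n‖ ^ 2) ≤ 1 ∧
    r = luxNormC Φ
      (fun x => ∑ n ∈ A, a n * Complex.exp (2 * (Real.pi : ℂ) * Complex.I * (n : ℂ) * (x : ℂ)))}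

/-- `diam E = |max E − min E| + 1` for a (nonempty) finite set of integers. -/
def diamZ (E : Finset ℤ) : ℕ :=
  (WithBot.unbotD 0 E.max - WithTop.untopD 0 E.min).natAbs + 1

end

/-- The complementary Young function `Ψ(v) = sup_{u ≥ 0} (u v − Φ(u))`. -/
noncomputable def complYoung (Φ : ℝ → ℝ) (v : ℝ) : ℝ :=
  sSup {w : ℝ | ∃ u : ℝ, 0 ≤ u ∧ w = u * v - Φ u}

/-- The Fejér kernel `K_N(x) = Σ_{|n|≤N} (1 − |n|/N) e^{2πinx}`. -/
noncomputable def fejer (N : ℕ) (x : ℝ) : ℂ :=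
  ∑ n ∈ Finset.Icc (-(N : ℤ)) (N : ℤ),
    ((1 - |(n : ℝ)| / (N : ℝ) : ℝ) : ℂ) *
      Complex.exp (2 * (Real.pi : ℂ) * Complex.I * (n : ℂ) * (x : ℂ))



noncomputable def EE (x : ℝ) (n : ℤ) : ℂ :=
  Complex.exp (2 * (Real.pi : ℂ) * Complex.I * (n : ℂ) * (x : ℂ))

lemma EE_add (x : ℝ) (m n : ℤ) : EE x m * EE x n = EE x (m + n) := by
  rw [EE, EE, EE, ← Complex.exp_add]
  push_cast; ring_nf

lemma EE_zero (x : ℝ) : EE x 0 = 1 := by simp [EE]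

lemma EE_abs (x : ℝ) (n : ℤ) : ‖EE x n‖ = 1 := by
  have : EE x n = Complex.exp ((2 * Real.pi * n * x : ℝ) * Complex.I) := by
    rw [EE]; push_cast; ring_nf
  rw [this, Complex.norm_exp_ofReal_mul_I]

lemma EE_conj (x : ℝ) (n : ℤ) : (starRingEnd ℂ) (EE x n) = EE x (-n) := by
  rw [EE, EE, ← Complex.exp_conj]
  congr 1
  simp only [map_mul, Complex.conj_I, Complex.conj_ofReal, map_ofNat, map_intCast]
  push_cast; ring

lemma Icc_eq_Ico (a b : ℤ) : Finset.Icc a b = Finset.Ico a (b + 1) := by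
  ext n; simp [Finset.mem_Icc, Finset.mem_Ico]

lemma sum_Ico_split (a b c : ℤ) (hab : a ≤ b) (hbc : b ≤ c) (f : ℤ → ℂ) :
    ∑ n ∈ Finset.Ico a c, f n = (∑ n ∈ Finset.Ico a b, f n) + ∑ n ∈ Finset.Ico b c, f n := by
  rw [← Finset.sum_union (Finset.Ico_disjoint_Ico_consecutive a b c),
    Finset.Ico_union_Ico_eq_Ico hab hbc]

lemma reindex_R1 (N : ℕ) (f : ℤ → ℂ) :
    ∑ k ∈ Finset.range N, f ((N : ℤ) - k) = ∑ n ∈ Finset.Icc 1 (N : ℤ), f n := by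
  refine Finset.sum_nbij' (fun k => (N : ℤ) - k) (fun n => ((N : ℤ) - n).toNat) ?_ ?_ ?_ ?_ ?_
  · intro a ha; simp only [Finset.mem_range] at ha; simp [Finset.mem_Icc]; omega
  · intro a ha; simp only [Finset.mem_Icc] at ha; simp [Finset.mem_range]; omega
  · intro a ha; simp only [Finset.mem_range] at ha; simp
  · intro a ha; simp only [Finset.mem_Icc] at ha; simp; omega
  · intro a ha; rfl

lemma reindex_R2 (N : ℕ) (f : ℤ → ℂ) :
    ∑ j ∈ Finset.range N, f ((j : ℤ) - N) = ∑ n ∈ Finset.Icc (-(N : ℤ)) (-1), f n := by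
  refine Finset.sum_nbij' (fun k => (k : ℤ) - N) (fun n => (n + (N : ℤ)).toNat) ?_ ?_ ?_ ?_ ?_
  · intro a ha; simp only [Finset.mem_range] at ha; simp [Finset.mem_Icc]; omega
  · intro a ha; simp only [Finset.mem_Icc] at ha; simp [Finset.mem_range]; omega
  · intro a ha; simp only [Finset.mem_range] at ha; simp
  · intro a ha; simp only [Finset.mem_Icc] at ha; simp; omega
  · intro a ha; rfl

lemma Ico_singleton (a : ℤ) : Finset.Ico a (a + 1) = {a} := by
  ext n; simp [Finset.mem_Ico]; omega

lemma mid_sum (x : ℝ) (N : ℕ) :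
    ∑ n ∈ Finset.Icc (-(N : ℤ)) (N : ℤ), EE x n
      = (∑ k ∈ Finset.range N, EE x ((N : ℤ) - k))
        + (∑ j ∈ Finset.range N, EE x ((j : ℤ) - N)) + 1 := by
  rw [reindex_R1, reindex_R2]
  rw [Icc_eq_Ico, sum_Ico_split (-(N : ℤ)) 0 ((N : ℤ) + 1) (by omega) (by omega),
    sum_Ico_split 0 1 ((N : ℤ) + 1) (by omega) (by omega)]
  have h1 : Finset.Ico (-(N : ℤ)) 0 = Finset.Icc (-(N : ℤ)) (-1) := by
    rw [Icc_eq_Ico]; norm_num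
  have h2 : Finset.Ico (0 : ℤ) 1 = {0} := Ico_singleton 0
  have h3 : Finset.Ico (1 : ℤ) ((N : ℤ) + 1) = Finset.Icc 1 (N : ℤ) := (Icc_eq_Ico 1 N).symm
  rw [h1, h2, h3, Finset.sum_singleton, EE_zero]
  ring

lemma fejer_key (x : ℝ) (N : ℕ) :
    (∑ j ∈ Finset.range N, EE x (j : ℤ)) * (∑ j ∈ Finset.range N, EE x (-(j : ℤ))) =
    ∑ n ∈ Finset.Icc (-(N : ℤ)) (N : ℤ), (((N : ℝ) - |(n : ℝ)|) : ℂ) * EE x n := by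
  induction N with
  | zero => simp
  | succ N ih =>
    have hA : EE x (N : ℤ) * (∑ j ∈ Finset.range N, EE x (-(j : ℤ)))
        = ∑ k ∈ Finset.range N, EE x ((N : ℤ) - k) := by
      rw [Finset.mul_sum]
      refine Finset.sum_congr rfl fun k _ => ?_
      rw [EE_add]; congr 1
    have hB : EE x (-(N : ℤ)) * (∑ j ∈ Finset.range N, EE x (j : ℤ))
        = ∑ j ∈ Finset.range N, EE x ((j : ℤ) - N) := by
      rw [Finset.mul_sum]
      refine Finset.sum_congr rfl fun k _ => ?_
      rw [EE_add]; congr 1; ring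
    have hC : EE x (N : ℤ) * EE x (-(N : ℤ)) = 1 := by
      rw [EE_add]; simp [EE_zero]
    have hsub : Finset.Icc (-(N : ℤ)) (N : ℤ) ⊆
        Finset.Icc (-((N + 1 : ℕ) : ℤ)) ((N + 1 : ℕ) : ℤ) := by
      intro n hn; simp only [Finset.mem_Icc] at *; omega
    have hR : ∑ n ∈ Finset.Icc (-((N + 1 : ℕ) : ℤ)) ((N + 1 : ℕ) : ℤ),
          ((((N + 1 : ℕ) : ℝ) - |(n : ℝ)|) : ℂ) * EE x n
        = ∑ n ∈ Finset.Icc (-(N : ℤ)) (N : ℤ),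
          ((((N + 1 : ℕ) : ℝ) - |(n : ℝ)|) : ℂ) * EE x n := by
      refine (Finset.sum_subset hsub fun n hn hn' => ?_).symm
      simp only [Finset.mem_Icc] at hn hn'
      have habsZ : |n| = (N : ℤ) + 1 := by
        rcases abs_cases n with ⟨h1, h2⟩ | ⟨h1, h2⟩ <;> omega
      have habsR : |(n : ℝ)| = (N : ℝ) + 1 := by
        rw [← Int.cast_abs, habsZ]; push_cast; ring
      rw [habsR]
      push_cast
      ring_nf
    have hsplit : ∑ n ∈ Finset.Icc (-(N : ℤ)) (N : ℤ),
          ((((N + 1 : ℕ) : ℝ) - |(n : ℝ)|) : ℂ) * EE x n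
        = (∑ n ∈ Finset.Icc (-(N : ℤ)) (N : ℤ), (((N : ℝ) - |(n : ℝ)|) : ℂ) * EE x n)
          + ∑ n ∈ Finset.Icc (-(N : ℤ)) (N : ℤ), EE x n := by
      rw [← Finset.sum_add_distrib]
      refine Finset.sum_congr rfl fun n _ => ?_
      push_cast; ring
    have key : (∑ j ∈ Finset.range (N + 1), EE x (j : ℤ)) *
          (∑ j ∈ Finset.range (N + 1), EE x (-(j : ℤ)))
        = (∑ j ∈ Finset.range N, EE x (j : ℤ)) * (∑ j ∈ Finset.range N, EE x (-(j : ℤ)))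
          + (EE x (N : ℤ) * (∑ j ∈ Finset.range N, EE x (-(j : ℤ)))
            + EE x (-(N : ℤ)) * (∑ j ∈ Finset.range N, EE x (j : ℤ))
            + EE x (N : ℤ) * EE x (-(N : ℤ))) := by
      rw [Finset.sum_range_succ, Finset.sum_range_succ]; push_cast; ring
    rw [key, ih, hA, hB, hC, hR, hsplit, mid_sum]
    try ring

lemma sum_conj (x : ℝ) (N : ℕ) :
    (∑ j ∈ Finset.range N, EE x (-(j : ℤ)))
      = (starRingEnd ℂ) (∑ j ∈ Finset.range N, EE x (j : ℤ)) := by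
  rw [map_sum]
  exact Finset.sum_congr rfl fun j _ => (EE_conj x j).symm

lemma fejer_repr (N : ℕ) (hN : 0 < N) (x : ℝ) :
    fejer N x
      = ((((N : ℝ))⁻¹ * Complex.normSq (∑ j ∈ Finset.range N, EE x (j : ℤ)) : ℝ) : ℂ) := by
  have hNR : (N : ℝ) ≠ 0 := by positivity
  have h1 : fejer N x
      = ∑ n ∈ Finset.Icc (-(N : ℤ)) (N : ℤ), ((1 - |(n : ℝ)| / (N : ℝ) : ℝ) : ℂ) * EE x n := rfl
  have h2 : ∀ n : ℤ, ((1 - |(n : ℝ)| / (N : ℝ) : ℝ) : ℂ)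
      = ((((N : ℝ))⁻¹ : ℝ) : ℂ) * (((N : ℝ) - |(n : ℝ)|) : ℂ) := by
    intro n
    have hNC : (N : ℂ) ≠ 0 := Nat.cast_ne_zero.mpr hN.ne'
    push_cast
    field_simp
  rw [h1]
  rw [Finset.sum_congr rfl fun n _ => by rw [h2 n, mul_assoc]]
  rw [← Finset.mul_sum, ← fejer_key, sum_conj, Complex.mul_conj]
  push_cast
  ring

lemma fejer_abs_le (N : ℕ) (hN : 0 < N) (x : ℝ) :
    ‖fejer N x‖ ≤ (N : ℝ) := by
  have hNR : (0 : ℝ) < (N : ℝ) := by positivity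
  have habsA : ‖∑ j ∈ Finset.range N, EE x (j : ℤ)‖ ≤ (N : ℝ) := by
    calc ‖∑ j ∈ Finset.range N, EE x (j : ℤ)‖
        ≤ ∑ j ∈ Finset.range N, ‖EE x (j : ℤ)‖ := norm_sum_le _ _
      _ = (N : ℝ) := by simp [EE_abs]
  rw [fejer_repr N hN x]
  rw [Complex.norm_real, Real.norm_eq_abs]
  have hns : Complex.normSq (∑ j ∈ Finset.range N, EE x (j : ℤ)) ≤ (N : ℝ) ^ 2 := by
    rw [Complex.normSq_eq_norm_sq]
    exact pow_le_pow_left₀ (norm_nonneg _) habsA 2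
  have hnn : (0 : ℝ) ≤ Complex.normSq (∑ j ∈ Finset.range N, EE x (j : ℤ)) :=
    Complex.normSq_nonneg _
  rw [abs_of_nonneg (mul_nonneg (by positivity) (Complex.normSq_nonneg _))]
  calc (N : ℝ)⁻¹ * Complex.normSq (∑ j ∈ Finset.range N, EE x (j : ℤ))
      ≤ (N : ℝ)⁻¹ * (N : ℝ) ^ 2 := by
        exact mul_le_mul_of_nonneg_left hns (by positivity)
    _ = (N : ℝ) := by field_simp

lemma fejer_re_eq (N : ℕ) (hN : 0 < N) (x : ℝ) :
    fejer N x = ((‖fejer N x‖ : ℝ) : ℂ) := by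
  rw [fejer_repr N hN x, Complex.norm_real, Real.norm_eq_abs,
    abs_of_nonneg (mul_nonneg (by positivity) (Complex.normSq_nonneg _))]

lemma EE_cont (n : ℤ) : Continuous fun x : ℝ => EE x n := by
  unfold EE
  exact Complex.continuous_exp.comp (by continuity)

lemma EE_integral (n : ℤ) :
    (∫ x in (0:ℝ)..1, EE x n) = if n = 0 then 1 else 0 := by
  by_cases hn : n = 0
  · subst hn; simp [EE_zero]
  · have hc : (2 * (Real.pi : ℂ) * Complex.I * (n : ℂ)) ≠ 0 := by
      apply mul_ne_zero
      apply mul_ne_zero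
      apply mul_ne_zero
      · norm_num
      · exact_mod_cast Complex.ofReal_ne_zero.mpr Real.pi_ne_zero
      · exact Complex.I_ne_zero
      · exact_mod_cast hn
    have h1 : (∫ x in (0:ℝ)..1, EE x n)
        = (Complex.exp ((2 * (Real.pi : ℂ) * Complex.I * (n : ℂ)) * (1:ℝ))
            - Complex.exp ((2 * (Real.pi : ℂ) * Complex.I * (n : ℂ)) * (0:ℝ)))
          / (2 * (Real.pi : ℂ) * Complex.I * (n : ℂ)) := by
      rw [← integral_exp_mul_complex hc]
      rfl
    rw [h1]
    have h2 : Complex.exp ((2 * (Real.pi : ℂ) * Complex.I * (n : ℂ)) * (1:ℝ)) = 1 := by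
      rw [show ((2 * (Real.pi : ℂ) * Complex.I * (n : ℂ)) * ((1:ℝ):ℂ))
          = (n : ℂ) * (2 * (Real.pi : ℂ) * Complex.I) by push_cast; ring]
      exact Complex.exp_int_mul_two_pi_mul_I n
    have h3 : Complex.exp ((2 * (Real.pi : ℂ) * Complex.I * (n : ℂ)) * (0:ℝ)) = 1 := by
      norm_num
    rw [h2, h3, if_neg hn]
    simp

lemma fejer_cont (N : ℕ) : Continuous (fejer N) := by
  unfold fejer
  refine continuous_finset_sum _ fun n _ => ?_
  exact continuous_const.mul (EE_cont n)

lemma fejer_integral (N : ℕ) (hN : 0 < N) :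
    (∫ x in (0:ℝ)..1, fejer N x) = 1 := by
  have : (∫ x in (0:ℝ)..1, fejer N x)
      = ∑ n ∈ Finset.Icc (-(N : ℤ)) (N : ℤ),
          ∫ x in (0:ℝ)..1, ((1 - |(n : ℝ)| / (N : ℝ) : ℝ) : ℂ) * EE x n := by
    rw [show (fun x => fejer N x) = fejer N from rfl]
    unfold fejer
    exact intervalIntegral.integral_finset_sum fun n _ =>
      (continuous_const.mul (EE_cont n)).intervalIntegrable _ _
  rw [this]
  rw [Finset.sum_congr rfl fun n _ => intervalIntegral.integral_const_mul _ _]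
  rw [Finset.sum_congr rfl fun n (_ : n ∈ _) => by rw [EE_integral n]]
  rw [Finset.sum_eq_single 0]
  · norm_num
  · intro n _ hn; rw [if_neg hn, mul_zero]
  · intro h; exact absurd (by simp only [Finset.mem_Icc]; omega : (0:ℤ) ∈ Finset.Icc (-(N:ℤ)) (N:ℤ)) h

lemma fejer_abs_integral (N : ℕ) (hN : 0 < N) :
    (∫ x in (0:ℝ)..1, ‖fejer N x‖) = 1 := by
  have h1 : (∫ x in (0:ℝ)..1, ((‖fejer N x‖ : ℝ) : ℂ))
      = ((∫ x in (0:ℝ)..1, ‖fejer N x‖ : ℝ) : ℂ) := intervalIntegral.integral_ofReal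
  have h2 : (∫ x in (0:ℝ)..1, ((‖fejer N x‖ : ℝ) : ℂ))
      = ∫ x in (0:ℝ)..1, fejer N x := by
    refine intervalIntegral.integral_congr fun x _ => ?_
    exact (fejer_re_eq N hN x).symm
  rw [h2, fejer_integral N hN] at h1
  exact_mod_cast h1.symm

lemma nice_unbounded {Φ : ℝ → ℝ} (hΦ : IsNiceYoung Φ) (C b : ℝ) :
    ∃ v : ℝ, b ≤ v ∧ 0 ≤ v ∧ C ≤ Φ v := by
  obtain ⟨M, hM⟩ := (Filter.tendsto_atTop.mp hΦ.2.2.2.2.2 (max C 1)).exists_forall_of_atTop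
  refine ⟨max M (max b 1), le_trans (le_max_left _ _) (le_max_right _ _), ?_, ?_⟩
  · have : (1:ℝ) ≤ max M (max b 1) := le_trans (le_max_right _ _) (le_max_right _ _)
    linarith
  · have h1 : (1:ℝ) ≤ max M (max b 1) := le_trans (le_max_right _ _) (le_max_right _ _)
    have h2 := hM (max M (max b 1)) (le_max_left _ _)
    have h3 : (0:ℝ) < max M (max b 1) := by linarith
    have h4 : Φ (max M (max b 1)) ≥ (max C 1) * max M (max b 1) := by
      rw [ge_iff_le, ← le_div_iff₀ h3]
      exact h2
    calc C ≤ max C 1 := le_max_left _ _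
      _ = (max C 1) * 1 := (mul_one _).symm
      _ ≤ (max C 1) * max M (max b 1) :=
          mul_le_mul_of_nonneg_left h1 (le_trans zero_le_one (le_max_right _ _))
      _ ≤ Φ (max M (max b 1)) := h4

lemma nice_nonneg {Φ : ℝ → ℝ} (hΦ : IsNiceYoung Φ) {u : ℝ} (hu : 0 ≤ u) : 0 ≤ Φ u := by
  by_contra h
  push_neg at h
  have hu0 : u ≠ 0 := by
    intro he; rw [he, hΦ.2.1] at h; exact absurd h (lt_irrefl 0)
  have hupos : 0 < u := lt_of_le_of_ne hu (Ne.symm hu0)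
  obtain ⟨v, huv, hv0, hv1⟩ := nice_unbounded hΦ 1 u
  have hcont : ContinuousOn Φ (Set.Icc u v) :=
    hΦ.2.2.1.mono (fun y hy => le_trans hu hy.1)
  have hmem : (0:ℝ) ∈ Set.Icc (Φ u) (Φ v) := ⟨h.le, by linarith⟩
  obtain ⟨c, hc1, hc2⟩ := intermediate_value_Icc huv hcont hmem
  have : c = 0 := (hΦ.2.2.2.1 c (le_trans hu hc1.1)).mp hc2
  rw [this] at hc1
  exact absurd hc1.1 (by linarith)

lemma youngInv_spec {Φ : ℝ → ℝ} (hΦ : IsNiceYoung Φ) {C : ℝ} (hC : 0 < C) :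
    0 < youngInv Φ C ∧ Φ (youngInv Φ C) = C := by
  set S : Set ℝ := {v : ℝ | 0 ≤ v ∧ C ≤ Φ v} with hS
  have hSne : S.Nonempty := by
    obtain ⟨v, _, hv0, hvC⟩ := nice_unbounded hΦ C 0
    exact ⟨v, hv0, hvC⟩
  have hSbdd : BddBelow S := ⟨0, fun v hv => hv.1⟩
  have hSclosed : IsClosed S := by
    have : S = Set.Ici (0:ℝ) ∩ Φ ⁻¹' Set.Ici C := by
      ext v; simp [hS, Set.mem_Ici]
    rw [this]
    exact hΦ.2.2.1.preimage_isClosed_of_isClosed isClosed_Ici isClosed_Ici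
  have hmem : sInf S ∈ S := hSclosed.csInf_mem hSne hSbdd
  have hk0 : 0 ≤ sInf S := hmem.1
  have hkC : C ≤ Φ (sInf S) := hmem.2
  have hkpos : 0 < sInf S := by
    rcases lt_or_eq_of_le hk0 with h | h
    · exact h
    · exfalso; rw [← h, hΦ.2.1] at hkC; linarith
  have hΦ0 : Φ 0 ≤ C := by rw [hΦ.2.1]; exact hC.le
  have hcont : ContinuousOn Φ (Set.Icc 0 (sInf S)) :=
    hΦ.2.2.1.mono (fun y hy => hy.1)
  obtain ⟨c, hc1, hc2⟩ := intermediate_value_Icc hk0 hcont ⟨hΦ0, hkC⟩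
  have hcS : c ∈ S := ⟨hc1.1, hc2.ge⟩
  have : sInf S ≤ c := csInf_le hSbdd hcS
  have hceq : c = sInf S := le_antisymm hc1.2 this
  constructor
  · exact hkpos
  · rw [youngInv, ← hS, ← hceq, hc2]

lemma compl_bddAbove {Φ : ℝ → ℝ} (hΦ : IsNiceYoung Φ) (v : ℝ) :
    BddAbove {w : ℝ | ∃ u : ℝ, 0 ≤ u ∧ w = u * v - Φ u} := by
  obtain ⟨M, hM⟩ := (Filter.tendsto_atTop.mp hΦ.2.2.2.2.2 (|v| + 1)).exists_forall_of_atTop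
  refine ⟨max M 1 * |v|, ?_⟩
  rintro w ⟨u, hu, rfl⟩
  by_cases hcase : u ≤ max M 1
  · calc u * v - Φ u ≤ u * v := by linarith [nice_nonneg hΦ hu]
      _ ≤ u * |v| := mul_le_mul_of_nonneg_left (le_abs_self v) hu
      _ ≤ max M 1 * |v| := mul_le_mul_of_nonneg_right hcase (abs_nonneg v)
  · push_neg at hcase
    have hu1 : (1:ℝ) < u := lt_of_le_of_lt (le_max_right _ _) hcase
    have hupos : (0:ℝ) < u := by linarith
    have h2 := hM u (le_trans (le_max_left _ _) hcase.le)
    have h3 : Φ u ≥ (|v| + 1) * u := by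
      rw [ge_iff_le, ← le_div_iff₀ hupos]; exact h2
    calc u * v - Φ u ≤ u * |v| - (|v| + 1) * u := by
          have := mul_le_mul_of_nonneg_left (le_abs_self v) hupos.le
          linarith
      _ = -u := by ring
      _ ≤ 0 := by linarith
      _ ≤ max M 1 * |v| :=
          mul_nonneg (le_trans zero_le_one (le_max_right _ _)) (abs_nonneg v)

lemma compl_nonneg {Φ : ℝ → ℝ} (hΦ : IsNiceYoung Φ) (v : ℝ) :
    0 ≤ complYoung Φ v := by
  apply le_csSup (compl_bddAbove hΦ v)
  exact ⟨0, le_refl 0, by rw [hΦ.2.1]; ring⟩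

lemma compl_mono {Φ : ℝ → ℝ} (hΦ : IsNiceYoung Φ) : Monotone (complYoung Φ) := by
  intro a b hab
  apply Real.sSup_le _ (compl_nonneg hΦ b)
  rintro w ⟨u, hu, rfl⟩
  calc u * a - Φ u ≤ u * b - Φ u := by
        have := mul_le_mul_of_nonneg_left hab hu; linarith
    _ ≤ complYoung Φ b := le_csSup (compl_bddAbove hΦ b) ⟨u, hu, rfl⟩

lemma compl_key {Φ : ℝ → ℝ} (hΦ : IsNiceYoung Φ) {k C v : ℝ}
    (hk : 0 < k) (hΦk : Φ k = C) (hv0 : 0 ≤ v) (hvC : v ≤ C) :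
    complYoung Φ (v / k) ≤ v := by
  apply Real.sSup_le _ hv0
  rintro w ⟨u, hu, rfl⟩
  by_cases hcase : u ≤ k
  · calc u * (v / k) - Φ u ≤ u * (v / k) := by linarith [nice_nonneg hΦ hu]
      _ = v * (u / k) := by ring
      _ ≤ v * 1 := by
          apply mul_le_mul_of_nonneg_left _ hv0
          rw [div_le_one hk]; exact hcase
      _ = v := mul_one v
  · push_neg at hcase
    have hslope := hΦ.1.slope_mono_adjacent (Set.self_mem_Ici)
      (Set.mem_Ici.mpr (by linarith : (0:ℝ) ≤ u)) hk hcase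
    rw [hΦ.2.1] at hslope
    have hΦu : Φ u ≥ u * C / k := by
      have h1 : (Φ k - 0) / (k - 0) = C / k := by rw [hΦk]; ring_nf
      rw [h1] at hslope
      have h2 : 0 < u - k := by linarith
      have h3 := (div_le_div_iff₀ (by positivity) h2).mp hslope
      have : C / k * (u - k) ≤ Φ u - Φ k := by
        have := mul_le_mul_of_nonneg_right hslope h2.le
        calc C / k * (u - k) ≤ (Φ u - Φ k) / (u - k) * (u - k) := this
          _ = Φ u - Φ k := by field_simp
      have hCk : C / k * (u - k) = u * C / k - C := by field_simp
      rw [hCk] at this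
      rw [hΦk] at this
      linarith
    calc u * (v / k) - Φ u ≤ u * v / k - u * C / k := by
          have : u * (v / k) = u * v / k := by ring
          linarith [hΦu, this.le]
      _ = (u / k) * (v - C) := by ring
      _ ≤ 0 := mul_nonpos_of_nonneg_of_nonpos (by positivity) (by linarith)
      _ ≤ v := hv0

/-- `‖K_N‖_Ψ ≤ 2 Φ⁻¹(N)` for all sufficiently large `N`. -/
theorem fejer_orlicz_bound (Φ : ℝ → ℝ) (hΦ : IsNiceYoung Φ) :
    ∃ N₀ : ℕ, ∀ N : ℕ, N₀ ≤ N →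
      luxNormC (complYoung Φ) (fejer N) ≤ 2 * youngInv Φ (N : ℝ) := by
  refine ⟨1, fun N hN => ?_⟩
  have hN0 : 0 < N := hN
  have hC : (0:ℝ) < (N : ℝ) := by exact_mod_cast hN0
  obtain ⟨hkpos, hΦk⟩ := youngInv_spec hΦ hC
  set k := youngInv Φ (N : ℝ) with hkdef
  -- pointwise bound
  have hpt : ∀ x : ℝ, complYoung Φ (|‖fejer N x‖| / k) ≤ ‖fejer N x‖ := by
    intro x
    rw [abs_of_nonneg (norm_nonneg _)]
    exact compl_key hΦ hkpos hΦk (norm_nonneg _) (fejer_abs_le N hN0 x)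
  -- integrability of the left side
  have hcontg : Continuous fun x : ℝ => |‖fejer N x‖| / k :=
    (continuous_norm.comp (fejer_cont N)).abs.div_const k
  have hmeas : Measurable fun x : ℝ => complYoung Φ (|‖fejer N x‖| / k) :=
    (compl_mono hΦ).measurable.comp hcontg.measurable
  have hbdd : ∀ x : ℝ, ‖complYoung Φ (|‖fejer N x‖| / k)‖ ≤ (N : ℝ) := by
    intro x
    rw [Real.norm_eq_abs, abs_of_nonneg (compl_nonneg hΦ _)]
    exact le_trans (hpt x) (fejer_abs_le N hN0 x)
  have hInt1 : IntervalIntegrable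
      (fun x : ℝ => complYoung Φ (|‖fejer N x‖| / k)) MeasureTheory.volume 0 1 := by
    rw [intervalIntegrable_iff]
    apply MeasureTheory.Measure.integrableOn_of_bounded (M := (N : ℝ))
    · rw [Set.uIoc_of_le (by norm_num : (0:ℝ) ≤ 1), Real.volume_Ioc]
      exact ENNReal.ofReal_ne_top
    · exact hmeas.aestronglyMeasurable
    · exact MeasureTheory.ae_of_all _ hbdd
  have hInt2 : IntervalIntegrable
      (fun x : ℝ => ‖fejer N x‖) MeasureTheory.volume 0 1 :=
    (continuous_norm.comp (fejer_cont N)).intervalIntegrable _ _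
  have hint : (∫ x in (0:ℝ)..1, complYoung Φ (|‖fejer N x‖| / k)) ≤ 1 := by
    calc (∫ x in (0:ℝ)..1, complYoung Φ (|‖fejer N x‖| / k))
        ≤ ∫ x in (0:ℝ)..1, ‖fejer N x‖ :=
          intervalIntegral.integral_mono_on (by norm_num) hInt1 hInt2 (fun x _ => hpt x)
      _ = 1 := fejer_abs_integral N hN0
  have hle : luxNormC (complYoung Φ) (fejer N) ≤ k := by
    rw [luxNormC, luxNorm]
    exact csInf_le ⟨0, fun a ha => ha.1.le⟩ ⟨hkpos, hint⟩
  calc luxNormC (complYoung Φ) (fejer N) ≤ k := hle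
    _ ≤ 2 * youngInv Φ (N : ℝ) := by rw [hkdef]; linarith
end

section
/- Let Φ be a nice Young function with Φ ∈ Δ₂ ∩ ∇₂. Then there exist a nice Young function Φ₁, a real u₀ > 0, and constants 1 < p ≤ q < ∞ such that Φ₁(u) = Φ(u) for all u ≥ u₀, Φ₁ is differentiable at every point where Φ is differentiable on [u₀,∞) and everywhere on (0, u₀), and p ≤ u·Φ₁′(u)/Φ₁(u) ≤ q at every u > 0 where Φ₁ is differentiable. In particular 1 < p_{Φ₁}^a ≤ q_{Φ₁}^a < ∞, where p_{Φ₁}^a = inf_{u>0} u·Φ₁′(u)/Φ₁(u) and q_{Φ₁}^a = sup_{u>0} u·Φ₁′(u)/Φ₁(u). -/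
open Filter MeasureTheory Set Topology

set_option maxHeartbeats 1000000 in
/-- if `Φ` is a nice Young function in `Δ₂ ∩ ∇₂`, there is a nice Young
function `Φ₁` agreeing with `Φ` on `[u₀,∞)` whose logarithmic derivative indices satisfy
`1 < p ≤ u Φ₁'(u)/Φ₁(u) ≤ q < ∞` wherever `Φ₁` is differentiable. -/
theorem modify_young_function (Φ : ℝ → ℝ) (hΦ : IsNiceYoung Φ)
    (hΔ : Delta2 Φ) (hNab : Nabla2 Φ) :
    ∃ Φ₁ : ℝ → ℝ, ∃ u₀ p q : ℝ, IsNiceYoung Φ₁ ∧ 0 < u₀ ∧ 1 < p ∧ p ≤ q ∧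
      (∀ u : ℝ, u₀ ≤ u → Φ₁ u = Φ u) ∧
      (∀ u : ℝ, u₀ ≤ u → DifferentiableAt ℝ Φ u → DifferentiableAt ℝ Φ₁ u) ∧
      (∀ u : ℝ, 0 < u → u < u₀ → DifferentiableAt ℝ Φ₁ u) ∧
      (∀ u : ℝ, 0 < u → DifferentiableAt ℝ Φ₁ u →
        p ≤ u * deriv Φ₁ u / Φ₁ u ∧ u * deriv Φ₁ u / Φ₁ u ≤ q) := by
  obtain ⟨hconv, h0, hcont, hzero, hlim0, hlimtop⟩ := hΦ
  obtain ⟨K₁, hK₁, u₁, hu₁, hΔ'⟩ := hΔ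
  obtain ⟨K₂, hK₂, u₂, hu₂, hN'⟩ := hNab
  have hK₂0 : (0:ℝ) < K₂ := by linarith
  have hp0 : 1 < 2 - 2 / K₂ := by
    have h1 : 2 / K₂ < 1 := (div_lt_one hK₂0).mpr hK₂
    linarith
  -- ratio u ↦ Φ u / u is monotone
  have hratio : ∀ u v : ℝ, 0 < u → u ≤ v → Φ u / u ≤ Φ v / v := by
    intro u v hu huv
    have hv : 0 < v := lt_of_lt_of_le hu huv
    have h := hconv.secant_mono (a := 0) (x := u) (y := v)
      (mem_Ici.2 le_rfl) (mem_Ici.2 hu.le) (mem_Ici.2 hv.le) hu.ne' hv.ne' huv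
    simpa [h0] using h
  have hnn : ∀ u : ℝ, 0 ≤ u → 0 ≤ Φ u := by
    intro u hu
    rcases eq_or_lt_of_le hu with h | h
    · rw [← h, h0]
    · have hd : (0:ℝ) ≤ Φ u / u := by
        refine le_of_tendsto hlim0 ?_
        filter_upwards [Ioc_mem_nhdsGT_of_mem ⟨le_rfl, h⟩] with w hw
        exact hratio w u hw.1 hw.2
      have h2 := mul_nonneg hd h.le
      rwa [div_mul_cancel₀ _ h.ne'] at h2
  have hpos : ∀ u : ℝ, 0 < u → 0 < Φ u := by
    intro u hu
    rcases (hnn u hu.le).lt_or_eq with h | h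
    · exact h
    · exact absurd ((hzero u hu.le).mp h.symm) hu.ne'
  have hmono : ∀ u v : ℝ, 0 ≤ u → u ≤ v → Φ u ≤ Φ v := by
    intro u v hu huv
    rcases eq_or_lt_of_le hu with h | h
    · rw [← h, h0]; exact hnn v (by linarith)
    · have hv : 0 < v := lt_of_lt_of_le h huv
      have h1 := hratio u v h huv
      rw [div_le_div_iff₀ h hv] at h1
      nlinarith [hnn v hv.le]
  set M : ℝ := max (max u₁ (2*u₂)) 1 with hMdef
  have hM1 : (1:ℝ) ≤ M := le_max_right _ _
  have hMu₁ : u₁ ≤ M := le_trans (le_max_left _ _) (le_max_left _ _)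
  have hMu₂ : 2*u₂ ≤ M := le_trans (le_max_right _ _) (le_max_left _ _)
  -- key derivative bounds at differentiability points beyond M
  have hKey : ∀ v : ℝ, M ≤ v → DifferentiableAt ℝ Φ v →
      (2 - 2/K₂) * Φ v ≤ v * deriv Φ v ∧ v * deriv Φ v ≤ (K₁ - 1) * Φ v := by
    intro v hv hdv
    have hv0 : (0:ℝ) < v := by linarith
    constructor
    · have hlow := hconv.slope_le_deriv (mem_Ici.2 (by linarith : (0:ℝ) ≤ v/2))
        (mem_Ici.2 hv0.le) (by linarith) hdv
      rw [slope_def_field] at hlow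
      have hNv := hN' (v/2) (by linarith)
      rw [show 2*(v/2) = v by ring] at hNv
      have hstep : Φ v - Φ (v/2) ≤ deriv Φ v * (v - v/2) := (div_le_iff₀ (by linarith)).mp hlow
      have hΦv := hpos v hv0
      have h1 : (2*K₂ - 2) * Φ v ≤ K₂ * (v * deriv Φ v) := by nlinarith
      rw [show 2 - 2/K₂ = (2*K₂-2)/K₂ by field_simp]
      rw [div_mul_eq_mul_div, div_le_iff₀ hK₂0]
      nlinarith [h1]
    · have hup := hconv.deriv_le_slope (mem_Ici.2 hv0.le)
        (mem_Ici.2 (by linarith : (0:ℝ) ≤ 2*v)) (by linarith) hdv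
      rw [slope_def_field] at hup
      have hΔv := hΔ' v (by linarith)
      have hstep : deriv Φ v * (2*v - v) ≤ Φ (2*v) - Φ v := (le_div_iff₀ (by linarith)).mp hup
      nlinarith [hstep, hΔv]
  -- choose a differentiability point u₀ > M
  have hΨmono : Monotone (fun x : ℝ => Φ (max x 0)) := by
    intro a b hab
    exact hmono _ _ (le_max_right _ _) (max_le_max hab le_rfl)
  obtain ⟨u₀, hu₀mem, hu₀diffΨ⟩ :
      ∃ u₀, u₀ ∈ Ioo M (M+1) ∧ DifferentiableAt ℝ (fun x : ℝ => Φ (max x 0)) u₀ := by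
    by_contra hcon
    push_neg at hcon
    have hnull := MeasureTheory.ae_iff.mp hΨmono.ae_differentiableAt
    have hz : MeasureTheory.volume (Ioo M (M+1)) = 0 :=
      MeasureTheory.measure_mono_null (fun x hx => hcon x hx) hnull
    rw [Real.volume_Ioo, show M+1-M = 1 by ring] at hz
    simp at hz
  have hMu₀ : M < u₀ := hu₀mem.1
  have hu₀pos : (0:ℝ) < u₀ := by linarith
  have hu₀diff : DifferentiableAt ℝ Φ u₀ := by
    have heq : (fun x : ℝ => Φ (max x 0)) =ᶠ[nhds u₀] Φ := by
      filter_upwards [eventually_gt_nhds hu₀pos] with x hx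
      rw [max_eq_left hx.le]
    exact (Filter.EventuallyEq.differentiableAt_iff heq).mp hu₀diffΨ
  set d := deriv Φ u₀ with hddef
  have hdbounds := hKey u₀ hMu₀.le hu₀diff
  have hΦu₀ : (0:ℝ) < Φ u₀ := hpos u₀ hu₀pos
  set r := u₀ * d / Φ u₀ with hrdef
  have hrd : r * Φ u₀ = u₀ * d := by rw [hrdef]; exact div_mul_cancel₀ _ hΦu₀.ne'
  have hrp : 2 - 2/K₂ ≤ r := by
    rw [hrdef]; exact (le_div_iff₀ hΦu₀).mpr (by linarith [hdbounds.1])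
  have hrq : r ≤ K₁ - 1 := by
    rw [hrdef]; exact (div_le_iff₀ hΦu₀).mpr (by linarith [hdbounds.2])
  have hr1 : 1 ≤ r := by linarith
  have hu₀r : (0:ℝ) < u₀ ^ r := Real.rpow_pos_of_pos hu₀pos r
  set c := Φ u₀ / u₀ ^ r with hcdef
  have hcpos : (0:ℝ) < c := div_pos hΦu₀ hu₀r
  have hcmul : c * u₀ ^ r = Φ u₀ := by rw [hcdef]; exact div_mul_cancel₀ _ hu₀r.ne'
  set Φ₁ : ℝ → ℝ := fun u => if u < u₀ then c * u ^ r else Φ u with hΦ₁def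
  have hΦ₁g : ∀ y : ℝ, y < u₀ → Φ₁ y = c * y ^ r := fun y hy => if_pos hy
  have hΦ₁Φ : ∀ y : ℝ, u₀ ≤ y → Φ₁ y = Φ y := fun y hy => if_neg (not_lt.mpr hy)
  have hΦ₁g' : ∀ y : ℝ, y ≤ u₀ → Φ₁ y = c * y ^ r := by
    intro y hy
    rcases lt_or_eq_of_le hy with h | h
    · exact hΦ₁g y h
    · rw [h, hΦ₁Φ u₀ le_rfl]; exact hcmul.symm
  -- tangent line of the power piece lies below it, with slope d at u₀
  have hTan : ∀ y : ℝ, 0 ≤ y → Φ u₀ + d * (y - u₀) ≤ c * y ^ r := by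
    intro y hy
    have hs : (-1:ℝ) ≤ y / u₀ - 1 := by
      have : (0:ℝ) ≤ y / u₀ := div_nonneg hy hu₀pos.le
      linarith
    have hB := one_add_mul_self_le_rpow_one_add hs hr1
    rw [show (1:ℝ) + (y/u₀ - 1) = y/u₀ by ring, Real.div_rpow hy hu₀pos.le] at hB
    have hB2 := mul_le_mul_of_nonneg_left hB hΦu₀.le
    have hL : Φ u₀ * (1 + r * (y / u₀ - 1)) = Φ u₀ + d * (y - u₀) := by
      have h3 : Φ u₀ * (1 + r * (y / u₀ - 1)) = Φ u₀ + (r * Φ u₀) * (y / u₀) - r * Φ u₀ := by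
        ring
      rw [h3, hrd]
      have h4 : u₀ * d * (y / u₀) = d * y := by
        field_simp
      rw [h4]
      ring
    have hR : Φ u₀ * (y ^ r / u₀ ^ r) = c * y ^ r := by rw [hcdef]; ring
    rw [hL, hR] at hB2
    exact hB2
  have hT2 : ∀ y : ℝ, 0 ≤ y → Φ u₀ - c * y ^ r ≤ d * (u₀ - y) := by
    intro y hy
    have := hTan y hy
    linarith
  have hT1 : ∀ z : ℝ, u₀ < z → d * (z - u₀) ≤ Φ z - Φ u₀ := by
    intro z hz
    have h := hconv.deriv_le_slope (mem_Ici.2 hu₀pos.le)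
      (mem_Ici.2 (by linarith : (0:ℝ) ≤ z)) hz hu₀diff
    rw [slope_def_field] at h
    have h2 := (le_div_iff₀ (by linarith : (0:ℝ) < z - u₀)).mp h
    linarith
  have hgconv : ConvexOn ℝ (Ici 0) (fun u : ℝ => c * u ^ r) := by
    have := (convexOn_rpow hr1).smul hcpos.le
    simpa [smul_eq_mul] using this
  -- convexity of Φ₁ on [0, ∞)
  have hconv1 : ConvexOn ℝ (Ici 0) Φ₁ := by
    apply convexOn_of_slope_mono_adjacent (convex_Ici 0)
    intro x y z hx hz hxy hyz
    have hx0 : (0:ℝ) ≤ x := hx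
    have hy0 : (0:ℝ) ≤ y := by linarith
    have hz0 : (0:ℝ) ≤ z := hz
    rcases le_or_gt z u₀ with hzu | hzu
    · rw [hΦ₁g' x (by linarith), hΦ₁g' y (by linarith), hΦ₁g' z hzu]
      exact hgconv.slope_mono_adjacent hx hz hxy hyz
    · rcases le_or_gt u₀ x with hxu | hxu
      · rw [hΦ₁Φ x hxu, hΦ₁Φ y (by linarith), hΦ₁Φ z (by linarith)]
        exact hconv.slope_mono_adjacent hx hz hxy hyz
      · rcases le_or_gt y u₀ with hyu | hyu
        · rw [hΦ₁g' x (by linarith), hΦ₁g' y hyu, hΦ₁Φ z hzu.le]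
          rcases lt_or_eq_of_le hyu with hyu' | hyeq
          · have F1 : (c * y ^ r - c * x ^ r) / (y - x) ≤ (c * u₀ ^ r - c * y ^ r) / (u₀ - y) :=
              hgconv.slope_mono_adjacent hx (mem_Ici.2 hu₀pos.le) hxy hyu'
            rw [hcmul] at F1
            refine le_trans F1 ?_
            rw [div_le_div_iff₀ (by linarith) (by linarith)]
            have h1 := mul_le_mul_of_nonneg_right (hT2 y hy0) (by linarith : (0:ℝ) ≤ z - u₀)
            have h2 := mul_le_mul_of_nonneg_right (hT1 z hzu) (by linarith : (0:ℝ) ≤ u₀ - y)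
            nlinarith [h1, h2]
          · rw [hyeq, hcmul]
            have hL : (Φ u₀ - c * x ^ r) / (u₀ - x) ≤ d :=
              (div_le_iff₀ (by linarith : (0:ℝ) < u₀ - x)).mpr (by linarith [hT2 x hx0])
            have hR : d ≤ (Φ z - Φ u₀) / (z - u₀) :=
              (le_div_iff₀ (by linarith : (0:ℝ) < z - u₀)).mpr (by linarith [hT1 z hzu])
            calc (Φ u₀ - c * x ^ r) / (u₀ - x) ≤ d := hL
              _ ≤ (Φ z - Φ u₀) / (z - u₀) := hR
        · rw [hΦ₁g x hxu, hΦ₁Φ y hyu.le, hΦ₁Φ z (by linarith)]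
          have C2 : (Φ y - Φ u₀) / (y - u₀) ≤ (Φ z - Φ y) / (z - y) :=
            hconv.slope_mono_adjacent (mem_Ici.2 hu₀pos.le) hz hyu hyz
          refine le_trans ?_ C2
          rw [div_le_div_iff₀ (by linarith) (by linarith)]
          have h1 := mul_le_mul_of_nonneg_right (hT2 x hx0) (by linarith : (0:ℝ) ≤ y - u₀)
          have h2 := mul_le_mul_of_nonneg_right (hT1 y hyu) (by linarith : (0:ℝ) ≤ u₀ - x)
          nlinarith [h1, h2]
  -- continuity of Φ₁ on [0, ∞)
  have hgcont : ∀ x : ℝ, ContinuousAt (fun u : ℝ => c * u ^ r) x := by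
    intro x
    exact continuousAt_const.mul (Real.continuousAt_rpow_const x r (Or.inr (by linarith)))
  have hcont1 : ContinuousOn Φ₁ (Ici 0) := by
    intro x hx
    rcases lt_trichotomy x u₀ with hlt | heq | hgt
    · have heqe : (fun u : ℝ => c * u ^ r) =ᶠ[nhds x] Φ₁ := by
        filter_upwards [eventually_lt_nhds hlt] with t ht
        exact (hΦ₁g t ht).symm
      exact ((hgcont x).congr heqe).continuousWithinAt
    · have hleft : ContinuousWithinAt Φ₁ (Iic u₀) u₀ :=
        ((hgcont u₀).continuousWithinAt).congr (fun y hy => hΦ₁g' y hy) (hΦ₁g' u₀ le_rfl)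
      have hright : ContinuousWithinAt Φ₁ (Ici u₀) u₀ := by
        have hΦcw : ContinuousWithinAt Φ (Ici u₀) u₀ :=
          (hcont u₀ (mem_Ici.2 hu₀pos.le)).mono (Ici_subset_Ici.mpr hu₀pos.le)
        exact hΦcw.congr (fun y hy => hΦ₁Φ y hy) (hΦ₁Φ u₀ le_rfl)
      have hu := hleft.union hright
      rw [Iic_union_Ici] at hu
      rw [heq]
      exact hu.mono (subset_univ _)
    · have heqe : Φ =ᶠ[nhds x] Φ₁ := by
        filter_upwards [eventually_gt_nhds hgt] with t ht
        exact (hΦ₁Φ t ht.le).symm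
      have hΦat : ContinuousAt Φ x := hcont.continuousAt (Ici_mem_nhds (by linarith))
      exact (hΦat.congr heqe).continuousWithinAt
  -- zeroes of Φ₁
  have hzero1 : ∀ u : ℝ, 0 ≤ u → (Φ₁ u = 0 ↔ u = 0) := by
    intro u hu
    constructor
    · intro h
      by_contra hne
      have hu' : 0 < u := lt_of_le_of_ne hu (Ne.symm hne)
      rcases lt_or_ge u u₀ with hlt | hge
      · rw [hΦ₁g u hlt] at h
        exact (mul_pos hcpos (Real.rpow_pos_of_pos hu' r)).ne' h
      · rw [hΦ₁Φ u hge] at h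
        exact (hpos u hu').ne' h
    · intro h
      rw [h, hΦ₁g 0 hu₀pos, Real.zero_rpow (by linarith : r ≠ 0), mul_zero]
  -- limit at 0⁺
  have hlim0' : Filter.Tendsto (fun u => Φ₁ u / u) (nhdsWithin 0 (Ioi 0)) (nhds 0) := by
    have h1 : Filter.Tendsto (fun u : ℝ => c * u ^ (r - 1)) (nhdsWithin 0 (Ioi 0)) (nhds 0) := by
      have hc1 : ContinuousAt (fun u : ℝ => u ^ (r-1)) 0 :=
        Real.continuousAt_rpow_const 0 (r-1) (Or.inr (by linarith))
      have h2 : Filter.Tendsto (fun u : ℝ => u ^ (r-1)) (nhdsWithin 0 (Ioi 0))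
          (nhds ((0:ℝ) ^ (r-1))) := hc1.continuousWithinAt
      rw [Real.zero_rpow (by linarith : r - 1 ≠ 0)] at h2
      simpa using h2.const_mul c
    apply h1.congr'
    filter_upwards [Ioo_mem_nhdsGT_of_mem (⟨le_rfl, hu₀pos⟩ : (0:ℝ) ∈ Ico 0 u₀)] with t ht
    rw [hΦ₁g t ht.2, Real.rpow_sub_one ht.1.ne']
    ring
  -- limit at ∞
  have hlimtop' : Filter.Tendsto (fun u => Φ₁ u / u) Filter.atTop Filter.atTop := by
    apply hlimtop.congr'
    filter_upwards [Filter.eventually_ge_atTop u₀] with t ht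
    rw [hΦ₁Φ t ht]
  -- derivative facts for Φ₁
  have hgderiv : ∀ x : ℝ, x ≠ 0 →
      HasDerivAt (fun u : ℝ => c * u ^ r) (c * (r * x ^ (r-1))) x :=
    fun x hx => (Real.hasDerivAt_rpow_const (Or.inl hx)).const_mul c
  have hgd : c * (r * u₀ ^ (r - 1)) = d := by
    have h1 : c * (r * u₀ ^ (r - 1)) = (r * Φ u₀) * (u₀ ^ r / u₀ ^ r) / u₀ := by
      rw [Real.rpow_sub_one hu₀pos.ne', hcdef]; ring
    rw [h1, div_self hu₀r.ne', mul_one, hrd, mul_comm u₀ d, mul_div_assoc,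
      div_self hu₀pos.ne', mul_one]
  have hΦ₁deriv_u₀ : HasDerivAt Φ₁ d u₀ := by
    have hleft : HasDerivWithinAt Φ₁ d (Iic u₀) u₀ := by
      have h1 := (hgderiv u₀ hu₀pos.ne').hasDerivWithinAt (s := Iic u₀)
      rw [hgd] at h1
      exact h1.congr (fun y hy => hΦ₁g' y hy) (hΦ₁g' u₀ le_rfl)
    have hright : HasDerivWithinAt Φ₁ d (Ici u₀) u₀ := by
      have h0' : HasDerivAt Φ d u₀ := hu₀diff.hasDerivAt
      exact (h0'.hasDerivWithinAt (s := Ici u₀)).congr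
        (fun y hy => hΦ₁Φ y hy) (hΦ₁Φ u₀ le_rfl)
    have hu := hleft.union hright
    rw [Iic_union_Ici] at hu
    exact hasDerivWithinAt_univ.mp hu
  have hderiv_lt : ∀ u : ℝ, 0 < u → u < u₀ →
      HasDerivAt Φ₁ (c * (r * u ^ (r-1))) u := by
    intro u hu hlt
    apply (hgderiv u hu.ne').congr_of_eventuallyEq
    filter_upwards [eventually_lt_nhds hlt] with t ht
    exact hΦ₁g t ht
  -- assemble
  refine ⟨Φ₁, u₀, 2 - 2/K₂, max (K₁ - 1) (2 - 2/K₂),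
    ⟨hconv1, (hzero1 0 le_rfl).mpr rfl, hcont1, hzero1, hlim0', hlimtop'⟩,
    hu₀pos, hp0, le_max_right _ _, fun u hu => hΦ₁Φ u hu, ?_,
    fun u hu hlt => (hderiv_lt u hu hlt).differentiableAt, ?_⟩
  · intro u hu hdu
    rcases eq_or_lt_of_le hu with hequ | hlt
    · rw [← hequ]
      exact hΦ₁deriv_u₀.differentiableAt
    · have heqe : Φ₁ =ᶠ[nhds u] Φ := by
        filter_upwards [eventually_gt_nhds hlt] with t ht
        exact hΦ₁Φ t ht.le
      exact (heqe.differentiableAt_iff).mpr hdu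
  · intro u hu hdu
    rcases lt_trichotomy u u₀ with hlt | hequ | hgt
    · have hd1 : deriv Φ₁ u = c * (r * u ^ (r-1)) := (hderiv_lt u hu hlt).deriv
      rw [hd1, hΦ₁g u hlt]
      have hur : (0:ℝ) < u ^ r := Real.rpow_pos_of_pos hu r
      have hval : u * (c * (r * u ^ (r-1))) / (c * u ^ r) = r := by
        rw [Real.rpow_sub_one hu.ne']
        field_simp
      rw [hval]
      exact ⟨hrp, le_trans hrq (le_max_left _ _)⟩
    · rw [hequ, hΦ₁deriv_u₀.deriv, hΦ₁Φ u₀ le_rfl, ← hrdef]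
      exact ⟨hrp, le_trans hrq (le_max_left _ _)⟩
    · have heqe : Φ₁ =ᶠ[nhds u] Φ := by
        filter_upwards [eventually_gt_nhds hgt] with t ht
        exact hΦ₁Φ t ht.le
      have hdΦ : DifferentiableAt ℝ Φ u := (heqe.differentiableAt_iff).mp hdu
      have hb := hKey u (by linarith) hdΦ
      rw [heqe.deriv_eq, hΦ₁Φ u hgt.le]
      have hΦu : (0:ℝ) < Φ u := hpos u hu
      constructor
      · rw [le_div_iff₀ hΦu]
        linarith [hb.1]
      · rw [div_le_iff₀ hΦu]
        have hm : K₁ - 1 ≤ max (K₁ - 1) (2 - 2/K₂) := le_max_left _ _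
        nlinarith [hb.2, mul_le_mul_of_nonneg_right hm hΦu.le]
end

section
/- Let Φ be a nice Young function with Φ ∈ Δ₂ and let p satisfy 1 < p < α_Φ^∞ < ∞. Then there exists a nice Young function Φ̃ such that Φ ∼ Φ̃ (equivalence of nice Young functions), Φ̃ ∈ Δ₂, and the function u ↦ Φ̃(u^{1/p}) on [0,∞) is convex. -/
open Filter MeasureTheory Set Topology

/-- Equivalence of nice Young functions: `Φ₁(c₁u) ≤ Φ₂(u) ≤ Φ₁(c₂u)` for `u ≥ u₀`. -/
def YoungEquiv (Φ₁ Φ₂ : ℝ → ℝ) : Prop :=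
  ∃ c₁ c₂ u₀ : ℝ, 0 < c₁ ∧ c₁ < c₂ ∧ 0 ≤ u₀ ∧
    ∀ u : ℝ, u₀ ≤ u → Φ₁ (c₁ * u) ≤ Φ₂ u ∧ Φ₂ u ≤ Φ₁ (c₂ * u)

section AuxYoung

variable {Φ : ℝ → ℝ}

lemma young_scale (hΦ : IsNiceYoung Φ) {t u : ℝ} (ht0 : 0 ≤ t) (ht1 : t ≤ 1) (hu : 0 ≤ u) :
    Φ (t * u) ≤ t * Φ u := by
  have h := hΦ.1.2 (Set.mem_Ici.2 hu) (Set.mem_Ici.2 (le_refl (0:ℝ))) ht0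
    (by linarith : (0:ℝ) ≤ 1 - t) (by ring)
  simpa [hΦ.2.1, smul_eq_mul] using h

lemma young_nonneg (hΦ : IsNiceYoung Φ) {u : ℝ} (hu : 0 ≤ u) : 0 ≤ Φ u := by
  rcases eq_or_lt_of_le hu with h | h
  · simp [← h, hΦ.2.1]
  have hev : ∀ᶠ s in nhdsWithin (0:ℝ) (Ioi 0), Φ s / s ≤ Φ u / u := by
    filter_upwards [Ioc_mem_nhdsGT_of_mem (Set.mem_Ico.2 ⟨le_refl 0, h⟩)] with s hs
    have hs0 : (0:ℝ) < s := hs.1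
    have hsc := young_scale hΦ (le_of_lt (div_pos hs0 h)) ((div_le_one h).2 hs.2) hu
    rw [div_mul_cancel₀ _ (ne_of_gt h)] at hsc
    rw [div_le_div_iff₀ hs0 h]
    have h2 : (s / u * Φ u) * u = Φ u * s := by field_simp
    calc Φ s * u ≤ (s / u * Φ u) * u := mul_le_mul_of_nonneg_right hsc h.le
      _ = Φ u * s := h2
  have hle := le_of_tendsto hΦ.2.2.2.2.1 hev
  have := mul_nonneg hle h.le
  rwa [div_mul_cancel₀ _ (ne_of_gt h)] at this

lemma young_pos (hΦ : IsNiceYoung Φ) {u : ℝ} (hu : 0 < u) : 0 < Φ u := by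
  rcases lt_or_eq_of_le (young_nonneg hΦ hu.le) with h | h
  · exact h
  · exact absurd ((hΦ.2.2.2.1 u hu.le).1 h.symm) (ne_of_gt hu)

lemma young_mono (hΦ : IsNiceYoung Φ) : MonotoneOn Φ (Ici 0) := by
  intro x hx y hy hxy
  rcases eq_or_lt_of_le (Set.mem_Ici.1 hy) with h | h
  · have hx0 : x = 0 := le_antisymm (hxy.trans h.symm.le) hx
    simp [hx0, ← h]
  · rcases eq_or_lt_of_le (Set.mem_Ici.1 hx) with hx0 | hx0
    · rw [← hx0, hΦ.2.1]; exact young_nonneg hΦ h.le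
    · have h1 := young_scale hΦ (le_of_lt (div_pos hx0 h)) ((div_le_one h).2 hxy) h.le
      rw [div_mul_cancel₀ _ (ne_of_gt h)] at h1
      calc Φ x ≤ x / y * Φ y := h1
        _ ≤ 1 * Φ y := mul_le_mul_of_nonneg_right ((div_le_one h).2 hxy) (young_nonneg hΦ h.le)
        _ = Φ y := one_mul _

lemma young_super (hΦ : IsNiceYoung Φ) {k u : ℝ} (hk : 1 ≤ k) (hu : 0 ≤ u) :
    k * Φ u ≤ Φ (k * u) := by
  have hk0 : (0:ℝ) < k := lt_of_lt_of_le one_pos hk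
  have h := young_scale hΦ (le_of_lt (by positivity : (0:ℝ) < 1/k)) (by rw [div_le_one hk0]; linarith) (by positivity : (0:ℝ) ≤ k * u)
  rw [one_div, inv_mul_cancel_left₀ (ne_of_gt hk0)] at h
  calc k * Φ u ≤ k * (k⁻¹ * Φ (k*u)) := mul_le_mul_of_nonneg_left h hk0.le
    _ = Φ (k*u) := by field_simp

end AuxYoung

section Primitive

lemma primitive_convex {ψ : ℝ → ℝ} (hψ : Monotone ψ) :
    ConvexOn ℝ Set.univ (fun v => ∫ t in (0:ℝ)..v, ψ t) := by
  have hint : ∀ a b : ℝ, IntervalIntegrable ψ MeasureTheory.volume a b :=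
    fun a b => hψ.intervalIntegrable
  have hdiff : ∀ a b : ℝ,
      (∫ t in (0:ℝ)..b, ψ t) - (∫ t in (0:ℝ)..a, ψ t) = ∫ t in a..b, ψ t := by
    intro a b
    have := intervalIntegral.integral_add_adjacent_intervals (hint 0 a) (hint a b)
    linarith [this]
  have key : ∀ x y a b : ℝ, x ≤ y → 0 ≤ a → 0 ≤ b → a + b = 1 →
      (∫ t in (0:ℝ)..(a*x+b*y), ψ t) ≤
        a * (∫ t in (0:ℝ)..x, ψ t) + b * (∫ t in (0:ℝ)..y, ψ t) := by
    intro x y a b hxy ha hb hab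
    set m := a*x + b*y with hm
    have hb1 : a = 1 - b := by linarith
    have hm' : m = (1-b)*x + b*y := by rw [hm, hb1]
    have hxm : x ≤ m := by nlinarith [mul_nonneg hb (sub_nonneg.2 hxy), hm']
    have hmy : m ≤ y := by nlinarith [mul_nonneg ha (sub_nonneg.2 hxy), hm', hb1]
    have h1 : (∫ t in x..m, ψ t) ≤ (m - x) * ψ m := by
      have := intervalIntegral.integral_mono_on hxm (hint x m)
        (intervalIntegrable_const) (fun s hs => hψ hs.2)
      simpa [smul_eq_mul] using this
    have h2 : (y - m) * ψ m ≤ ∫ t in m..y, ψ t := by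
      have := intervalIntegral.integral_mono_on hmy (intervalIntegrable_const)
        (hint m y) (fun s hs => hψ hs.1)
      simpa [smul_eq_mul] using this
    rw [← hdiff x m] at h1
    rw [← hdiff m y] at h2
    have hmx : m - x = b*(y-x) := by rw [hm, hb1]; ring
    have hym : y - m = a*(y-x) := by rw [hm, hb1]; ring
    have heq : a*((m - x) * ψ m) = b*((y - m) * ψ m) := by rw [hmx, hym]; ring
    have s1 := mul_le_mul_of_nonneg_left h1 ha
    have s2 := mul_le_mul_of_nonneg_left h2 hb
    have habG : (a+b) * (∫ t in (0:ℝ)..m, ψ t) = ∫ t in (0:ℝ)..m, ψ t := by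
      rw [hab, one_mul]
    linarith [s1, s2, heq, habG]
  refine ⟨convex_univ, fun x _ y _ a b ha hb hab => ?_⟩
  simp only [smul_eq_mul]
  rcases le_total x y with h | h
  · exact key x y a b h ha hb hab
  · have h2 := key y x b a h hb ha (by linarith)
    calc (∫ t in (0:ℝ)..(a*x+b*y), ψ t) = (∫ t in (0:ℝ)..(b*y+a*x), ψ t) := by rw [add_comm]
      _ ≤ b * (∫ t in (0:ℝ)..y, ψ t) + a * (∫ t in (0:ℝ)..x, ψ t) := h2
      _ = a * (∫ t in (0:ℝ)..x, ψ t) + b * (∫ t in (0:ℝ)..y, ψ t) := by ring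

end Primitive

section GoodT0

set_option maxHeartbeats 1000000 in
lemma exists_good_t0 (Φ : ℝ → ℝ) (hΦ : IsNiceYoung Φ) (hΔ : Delta2 Φ) {p : ℝ}
    (hpα : p < alphaInfty Φ) :
    ∃ t₀ : ℝ, 0 < t₀ ∧ t₀ < 1 ∧ ∃ U₀ : ℝ, 1 ≤ U₀ ∧
      ∀ u, U₀ ≤ u → Φ (t₀ * u) ≤ t₀ ^ p * Φ u := by
  classical
  obtain ⟨K₁, hK₁, u₁, hu₁, hKprop⟩ := hΔ
  set K := max K₁ 2 with hKdef
  have hK2 : (2:ℝ) ≤ K := le_max_right _ _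
  have hK0 : (0:ℝ) < K := by linarith
  have hKp : ∀ u, u₁ ≤ u → Φ (2*u) ≤ K * Φ u := fun u hu =>
    (hKprop u hu).trans (mul_le_mul_of_nonneg_right (le_max_left _ _)
      (young_nonneg hΦ (le_trans hu₁ hu)))
  have hiter : ∀ n : ℕ, ∀ u : ℝ, u₁ ≤ u → Φ (2^n * u) ≤ K^n * Φ u := by
    intro n
    induction n with
    | zero => intro u _; simp
    | succ n ih =>
      intro u hu
      have hu0 : 0 ≤ u := le_trans hu₁ hu
      have h1 : u ≤ 2^n * u := le_mul_of_one_le_left hu0 (one_le_pow₀ (by norm_num : (1:ℝ) ≤ 2))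
      calc Φ (2^(n+1) * u) = Φ (2 * (2^n * u)) := by
            rw [show (2:ℝ)^(n+1)*u = 2*(2^n*u) by ring]
        _ ≤ K * Φ (2^n * u) := hKp _ (le_trans hu h1)
        _ ≤ K * (K^n * Φ u) := mul_le_mul_of_nonneg_left (ih u hu) hK0.le
        _ = K^(n+1) * Φ u := by ring
  -- basic facts about the ratio function
  have hnonnegEv : ∀ t : ℝ, 0 ≤ t → ∀ᶠ u in atTop, 0 ≤ Φ (t*u)/Φ u := by
    intro t ht
    filter_upwards [eventually_gt_atTop (0:ℝ)] with u hu
    exact div_nonneg (young_nonneg hΦ (mul_nonneg ht hu.le)) (young_nonneg hΦ hu.le)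
  have hleEv : ∀ t : ℝ, 0 < t → t ≤ 1 → ∀ᶠ u in atTop, Φ (t*u)/Φ u ≤ t := by
    intro t ht ht1
    filter_upwards [eventually_gt_atTop (0:ℝ)] with u hu
    exact (div_le_iff₀ (young_pos hΦ hu)).2 (young_scale hΦ ht.le ht1 hu.le)
  have hbdd : ∀ t : ℝ, 0 < t → t ≤ 1 →
      IsBoundedUnder (· ≤ ·) atTop (fun u => Φ (t*u)/Φ u) :=
    fun t ht ht1 => isBoundedUnder_of_eventually_le (hleEv t ht ht1)
  have hcob : ∀ t : ℝ, 0 ≤ t →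
      IsCoboundedUnder (· ≤ ·) atTop (fun u => Φ (t*u)/Φ u) :=
    fun t ht => (isBoundedUnder_of_eventually_ge (hnonnegEv t ht)).isCoboundedUnder_le
  have hMle : ∀ t : ℝ, 0 < t → t ≤ 1 → MInfty Φ t ≤ t :=
    fun t ht ht1 => limsup_le_of_le (hcob t ht.le) (hleEv t ht ht1)
  have hM0 : ∀ t : ℝ, 0 < t → t ≤ 1 → 0 ≤ MInfty Φ t :=
    fun t ht ht1 => le_limsup_of_frequently_le ((hnonnegEv t ht.le).frequently) (hbdd t ht ht1)
  -- lower bound via Δ₂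
  have hMlow : ∀ (t:ℝ) (n:ℕ), 0 < t → t ≤ 1 → 1/2^n ≤ t → (K^n)⁻¹ ≤ MInfty Φ t := by
    intro t n ht ht1 h2n
    refine le_limsup_of_frequently_le (Eventually.frequently ?_) (hbdd t ht ht1)
    filter_upwards [eventually_ge_atTop (max ((2:ℝ)^n * (max u₁ 1)) 1)] with u hu
    have hu1 : (1:ℝ) ≤ u := le_trans (le_max_right _ _) hu
    have hu0 : (0:ℝ) < u := lt_of_lt_of_le one_pos hu1
    have h2 : (2:ℝ)^n * (max u₁ 1) ≤ u := le_trans (le_max_left _ _) hu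
    have h2npos : (0:ℝ) < 2^n := pow_pos two_pos n
    set v := u / 2^n with hv
    have hv1 : u₁ ≤ v := by
      rw [hv, le_div_iff₀ h2npos]
      calc u₁ * 2^n ≤ (max u₁ 1) * 2^n :=
            mul_le_mul_of_nonneg_right (le_max_left _ _) h2npos.le
        _ = 2^n * (max u₁ 1) := by ring
        _ ≤ u := h2
    have hvpos : 0 < v := div_pos hu0 h2npos
    have hvu : (2:ℝ)^n * v = u := by rw [hv]; field_simp
    have hiter' : Φ u ≤ K^n * Φ v := by
      have := hiter n v hv1
      rwa [hvu] at this
    have hvle : v ≤ t * u := by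
      calc v = (1/2^n)*u := by rw [hv]; ring
        _ ≤ t*u := mul_le_mul_of_nonneg_right h2n hu0.le
    have hmono := young_mono hΦ (Set.mem_Ici.2 hvpos.le)
      (Set.mem_Ici.2 (mul_nonneg ht.le hu0.le)) hvle
    have hKn : (0:ℝ) < K^n := pow_pos hK0 n
    rw [le_div_iff₀ (young_pos hΦ hu0)]
    have : Φ u ≤ K^n * Φ (t*u) := hiter'.trans (mul_le_mul_of_nonneg_left hmono hKn.le)
    rw [inv_mul_le_iff₀ hKn]
    exact this
  have hMpos : ∀ t : ℝ, 0 < t → t ≤ 1 → 0 < MInfty Φ t := by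
    intro t ht ht1
    obtain ⟨n, hn⟩ := pow_unbounded_of_one_lt (1/t) (one_lt_two (α := ℝ))
    have h2n : 1/2^n ≤ t := by
      rw [div_lt_iff₀ ht] at hn
      rw [div_le_iff₀ (pow_pos two_pos n)]
      nlinarith
    exact lt_of_lt_of_le (by positivity) (hMlow t n ht ht1 h2n)
  have hMmono : ∀ s t : ℝ, 0 < s → s ≤ t → t ≤ 1 → MInfty Φ s ≤ MInfty Φ t := by
    intro s t hs hst ht1
    refine limsup_le_limsup ?_ (hcob s hs.le) (hbdd t (lt_of_lt_of_le hs hst) ht1)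
    filter_upwards [eventually_gt_atTop (0:ℝ)] with u hu
    exact div_le_div_of_nonneg_right (c := Φ u)
      (young_mono hΦ (Set.mem_Ici.2 (mul_nonneg hs.le hu.le))
        (Set.mem_Ici.2 (mul_nonneg (by linarith : (0:ℝ) ≤ t) hu.le))
        (mul_le_mul_of_nonneg_right hst hu.le)) (young_pos hΦ hu).le
  have hMsub : ∀ s t : ℝ, 0 < s → s ≤ 1 → 0 < t → t ≤ 1 →
      MInfty Φ (s*t) ≤ MInfty Φ s * MInfty Φ t := by
    intro s t hs hs1 ht ht1
    have hst : 0 < s*t := mul_pos hs ht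
    refine le_of_forall_pos_le_add ?_
    intro δ hδ
    have hMsnn := hM0 s hs hs1
    have hMtnn := hM0 t ht ht1
    have hden : (0:ℝ) < MInfty Φ s + MInfty Φ t + 1 := by linarith
    set ε := min 1 (δ/(MInfty Φ s + MInfty Φ t + 1)) with hεdef
    have hεpos : 0 < ε := lt_min one_pos (div_pos hδ hden)
    have hε1 : ε ≤ 1 := min_le_left _ _
    have hε2 : ε * (MInfty Φ s + MInfty Φ t + 1) ≤ δ := by
      calc ε * (MInfty Φ s + MInfty Φ t + 1)
          ≤ (δ/(MInfty Φ s + MInfty Φ t + 1)) * (MInfty Φ s + MInfty Φ t + 1) :=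
            mul_le_mul_of_nonneg_right (min_le_right _ _) hden.le
        _ = δ := div_mul_cancel₀ _ hden.ne'
    have hA := eventually_lt_of_limsup_lt
      (show MInfty Φ s < MInfty Φ s + ε by linarith) (hbdd s hs hs1)
    have hB := eventually_lt_of_limsup_lt
      (show MInfty Φ t < MInfty Φ t + ε by linarith) (hbdd t ht ht1)
    rw [eventually_atTop] at hA hB
    obtain ⟨V, hV⟩ := hA
    obtain ⟨W, hW⟩ := hB
    have hkey : ∀ᶠ u in atTop,
        Φ (s*t*u)/Φ u ≤ (MInfty Φ s + ε)*(MInfty Φ t + ε) := by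
      filter_upwards [eventually_ge_atTop (max (max W 1) (V/t))] with u hu
      have hu1 : (1:ℝ) ≤ u := le_trans (le_trans (le_max_right _ _) (le_max_left _ _)) hu
      have hu0 : (0:ℝ) < u := lt_of_lt_of_le one_pos hu1
      have htu : 0 < t*u := mul_pos ht hu0
      have hVtu : V ≤ t*u := by
        have h3 : V/t ≤ u := le_trans (le_max_right _ _) hu
        rw [div_le_iff₀ ht] at h3
        linarith [h3]
      have h1 : Φ (s*(t*u))/Φ (t*u) < MInfty Φ s + ε := hV _ hVtu
      have h2 : Φ (t*u)/Φ u < MInfty Φ t + ε :=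
        hW u (le_trans (le_trans (le_max_left _ _) (le_max_left _ _)) hu)
      have hΦtu : Φ (t*u) ≠ 0 := ne_of_gt (young_pos hΦ htu)
      have hΦu : Φ u ≠ 0 := ne_of_gt (young_pos hΦ hu0)
      have hrw : Φ (s*t*u)/Φ u = (Φ (s*(t*u))/Φ (t*u)) * (Φ (t*u)/Φ u) := by
        rw [mul_assoc s t u]
        field_simp
      rw [hrw]
      have hnn1 : 0 ≤ Φ (s*(t*u))/Φ (t*u) :=
        div_nonneg (young_nonneg hΦ (by positivity)) (young_nonneg hΦ htu.le)
      have hnn2 : 0 ≤ Φ (t*u)/Φ u :=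
        div_nonneg (young_nonneg hΦ htu.le) (young_nonneg hΦ hu0.le)
      exact mul_le_mul h1.le h2.le hnn2 (by linarith)
    have hup := limsup_le_of_le (hcob (s*t) hst.le) hkey
    calc MInfty Φ (s*t) ≤ (MInfty Φ s + ε)*(MInfty Φ t + ε) := hup
      _ ≤ MInfty Φ s * MInfty Φ t + δ := by nlinarith [hε2, mul_le_mul_of_nonneg_left hε1 hεpos.le]
  have hMpow : ∀ t : ℝ, 0 < t → t < 1 → ∀ n:ℕ, MInfty Φ (t^(n+1)) ≤ (MInfty Φ t)^(n+1) := by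
    intro t ht ht1 n
    induction n with
    | zero => simp
    | succ n ih =>
      have htn : 0 < t^(n+1) := pow_pos ht _
      have htn1 : t^(n+1) ≤ 1 := le_of_lt (pow_lt_one₀ ht.le ht1 (Nat.succ_ne_zero n))
      calc MInfty Φ (t^(n+2)) = MInfty Φ (t * t^(n+1)) := by rw [show t^(n+2) = t*t^(n+1) by ring]
        _ ≤ MInfty Φ t * MInfty Φ (t^(n+1)) := hMsub t (t^(n+1)) ht ht1.le htn htn1
        _ ≤ MInfty Φ t * (MInfty Φ t)^(n+1) :=
            mul_le_mul_of_nonneg_left ih (hM0 t ht ht1.le)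
        _ = (MInfty Φ t)^(n+2) := by ring
  -- the normalized log-ratio function
  set L : ℝ → ℝ := fun t => Real.log (MInfty Φ t) / Real.log t with hLdef
  have hL1 : ∀ t : ℝ, 0 < t → t < 1 → 1 ≤ L t := by
    intro t h0 h1
    have hM := hMpos t h0 h1.le
    have hMt := hMle t h0 h1.le
    have hlogt : Real.log t < 0 := Real.log_neg h0 h1
    have hlogM : Real.log (MInfty Φ t) ≤ Real.log t := (Real.log_le_log_iff hM h0).2 hMt
    rw [hLdef]
    rw [le_div_iff_of_neg hlogt]
    linarith
  have hlog2 : (0:ℝ) < Real.log 2 := Real.log_pos one_lt_two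
  have hlogK : Real.log 2 ≤ Real.log K := (Real.log_le_log_iff two_pos hK0).2 hK2
  set B : ℝ := 2 * Real.log K / Real.log 2 with hBdef
  have hLB : ∀ t : ℝ, 0 < t → t ≤ 1/2 → L t ≤ B := by
    intro t h0 h12
    have h1 : t < 1 := by linarith
    have hex : ∃ n : ℕ, 1/2^n ≤ t := by
      obtain ⟨n, hn⟩ := pow_unbounded_of_one_lt (1/t) (one_lt_two (α := ℝ))
      refine ⟨n, ?_⟩
      rw [div_lt_iff₀ h0] at hn
      rw [div_le_iff₀ (pow_pos two_pos n)]
      nlinarith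
    set n := Nat.find hex with hndef
    have h2n : 1/2^n ≤ t := Nat.find_spec hex
    have hn0 : n ≠ 0 := by
      intro h
      rw [h] at h2n
      norm_num at h2n
      linarith
    have hnot : ¬ (1/2^(n-1) ≤ t) := Nat.find_min hex (Nat.sub_lt (Nat.pos_of_ne_zero hn0) one_pos)
    push_neg at hnot
    have hMl := hMlow t n h0 h1.le h2n
    have hMu : MInfty Φ t < 1 := lt_of_le_of_lt (hMle t h0 h1.le) h1
    have hMp := hMpos t h0 h1.le
    -- log bounds
    have hKn : (0:ℝ) < K^n := pow_pos hK0 n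
    have A1 : -Real.log (MInfty Φ t) ≤ (n:ℝ) * Real.log K := by
      have := (Real.log_le_log_iff (by positivity) hMp).2 hMl
      rw [Real.log_inv, Real.log_pow] at this
      linarith
    have A2 : Real.log t < -(((n:ℝ)-1) * Real.log 2) := by
      have h3 : Real.log t < Real.log (1/2^(n-1)) := (Real.log_lt_log_iff h0 (by positivity)).2 hnot
      rw [one_div, Real.log_inv, Real.log_pow] at h3
      have hcast : ((n-1 : ℕ):ℝ) = (n:ℝ) - 1 := by
        have := Nat.pos_of_ne_zero hn0
        push_cast [Nat.cast_sub this]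
        ring
      rw [hcast] at h3
      linarith
    have A3 : Real.log t ≤ -Real.log 2 := by
      have h3 : Real.log t ≤ Real.log (1/2) := (Real.log_le_log_iff h0 one_half_pos).2 h12
      rw [one_div, Real.log_inv] at h3
      exact h3
    have hD : ((n:ℝ) * Real.log 2)/2 ≤ -Real.log t := by linarith
    have hDpos : (0:ℝ) < ((n:ℝ) * Real.log 2)/2 := by
      have : (1:ℝ) ≤ (n:ℝ) := by exact_mod_cast Nat.one_le_iff_ne_zero.2 hn0
      nlinarith
    have hMlog0 : 0 ≤ -Real.log (MInfty Φ t) := by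
      have := Real.log_neg hMp hMu
      linarith
    have hfrac : L t = (-Real.log (MInfty Φ t)) / (-Real.log t) := by
      rw [hLdef, neg_div_neg_eq]
    rw [hfrac]
    calc (-Real.log (MInfty Φ t)) / (-Real.log t)
        ≤ ((n:ℝ) * Real.log K) / (((n:ℝ) * Real.log 2)/2) :=
          div_le_div₀ (mul_nonneg (Nat.cast_nonneg n) (by linarith : (0:ℝ) ≤ Real.log K)) A1 hDpos hD
      _ = B := by
          rw [hBdef]
          have hn' : ((n:ℝ)) ≠ 0 := by
            exact_mod_cast hn0
          field_simp
  -- the limit value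
  set Sset : Set ℝ := L '' Ioc (0:ℝ) (1/2) with hSsetdef
  have hSne : Sset.Nonempty := ⟨L (1/2), ⟨1/2, ⟨one_half_pos, le_refl _⟩, rfl⟩⟩
  have hSbdd : BddAbove Sset := by
    refine ⟨B, ?_⟩
    rintro x ⟨t, ht, rfl⟩
    exact hLB t ht.1 ht.2
  set S := sSup Sset with hSdef
  have hS1 : 1 ≤ S :=
    le_trans (hL1 (1/2) one_half_pos one_half_lt_one)
      (le_csSup hSbdd ⟨1/2, ⟨one_half_pos, le_refl _⟩, rfl⟩)
  have htendsto : Tendsto L (nhdsWithin 0 (Ioi 0)) (nhds S) := by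
    rw [Metric.tendsto_nhdsWithin_nhds]
    intro ε hε
    obtain ⟨x, ⟨t₀, ht₀mem, rfl⟩, hx⟩ := exists_lt_of_lt_csSup hSne
      (show S - ε/2 < S by linarith)
    have ht₀0 : 0 < t₀ := ht₀mem.1
    have ht₀1 : t₀ < 1 := lt_of_le_of_lt ht₀mem.2 one_half_lt_one
    have hLt₀pos : 0 < L t₀ := lt_of_lt_of_le one_pos (hL1 t₀ ht₀0 ht₀1)
    obtain ⟨N, hN⟩ := exists_nat_gt (2 * L t₀ / ε)
    refine ⟨t₀^(N+1), pow_pos ht₀0 _, ?_⟩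
    intro t htIoi hdist
    have ht0 : (0:ℝ) < t := htIoi
    have htlt : t < t₀^(N+1) := by
      rw [Real.dist_eq, sub_zero, abs_of_pos ht0] at hdist
      exact hdist
    have hthalf : t ≤ 1/2 := by
      calc t ≤ t₀^(N+1) := htlt.le
        _ ≤ t₀^1 := pow_le_pow_of_le_one ht₀0.le ht₀1.le (by omega)
        _ ≤ 1/2 := by rw [pow_one]; exact ht₀mem.2
    have ht1 : t < 1 := by linarith
    have hup : L t ≤ S := le_csSup hSbdd ⟨t, ⟨ht0, hthalf⟩, rfl⟩
    have hex2 : ∃ m:ℕ, t₀^(m+1) < t := by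
      obtain ⟨m, hm⟩ := exists_pow_lt_of_lt_one ht0 ht₀1
      exact ⟨m, lt_of_le_of_lt
        (pow_le_pow_of_le_one ht₀0.le ht₀1.le (Nat.le_succ m)) hm⟩
    set n := Nat.find hex2 with hndef2
    have hn1 : t₀^(n+1) < t := Nat.find_spec hex2
    have hn2 : t ≤ t₀^n := by
      rcases Nat.eq_zero_or_pos n with h0 | h0
      · rw [h0, pow_zero]; linarith
      · have hmin := Nat.find_min hex2 (Nat.sub_lt h0 one_pos)
        push_neg at hmin
        have heq : n - 1 + 1 = n := by omega
        rwa [heq] at hmin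
    have hnN : N < n := by
      by_contra hc
      push_neg at hc
      have : t₀^(N+1) ≤ t₀^(n+1) :=
        pow_le_pow_of_le_one ht₀0.le ht₀1.le (by omega)
      linarith
    have hn0' : 0 < n := by omega
    have hMt_pos := hMpos t ht0 ht1.le
    have hMt₀pos := hMpos t₀ ht₀0 ht₀1.le
    have hMt₀lt1 : MInfty Φ t₀ < 1 := lt_of_le_of_lt (hMle t₀ ht₀0 ht₀1.le) ht₀1
    have hMtle : MInfty Φ t ≤ (MInfty Φ t₀)^n := by
      have h1 : MInfty Φ t ≤ MInfty Φ (t₀^n) :=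
        hMmono t (t₀^n) ht0 hn2 (pow_le_one₀ ht₀0.le ht₀1.le)
      have h2 : MInfty Φ (t₀^n) ≤ (MInfty Φ t₀)^n := by
        have h2' := hMpow t₀ ht₀0 ht₀1 (n-1)
        have heq : n - 1 + 1 = n := by omega
        rwa [heq] at h2'
      exact h1.trans h2
    set A := -Real.log (MInfty Φ t₀) with hAdef
    set D := -Real.log t₀ with hDdef
    have hApos : 0 < A := by
      rw [hAdef]
      have := Real.log_neg hMt₀pos hMt₀lt1
      linarith
    have hDpos : 0 < D := by
      rw [hDdef]
      have := Real.log_neg ht₀0 ht₀1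
      linarith
    have hLt₀ : L t₀ = A / D := by rw [hLdef, hAdef, hDdef, neg_div_neg_eq]
    have hMt₀npos : (0:ℝ) < (MInfty Φ t₀)^n := pow_pos hMt₀pos n
    have hXn : (n:ℝ) * A ≤ -Real.log (MInfty Φ t) := by
      have h3 : Real.log (MInfty Φ t) ≤ Real.log ((MInfty Φ t₀)^n) :=
        (Real.log_le_log_iff hMt_pos hMt₀npos).2 hMtle
      rw [Real.log_pow] at h3
      rw [hAdef]
      linarith [h3]
    have hDn : -Real.log t ≤ ((n:ℝ)+1) * D := by
      have h3 : Real.log (t₀^(n+1)) ≤ Real.log t :=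
        (Real.log_le_log_iff (pow_pos ht₀0 _) ht0).2 hn1.le
      rw [Real.log_pow] at h3
      rw [hDdef]
      push_cast at h3 ⊢
      nlinarith [h3]
    have hlogtpos : 0 < -Real.log t := by
      have := Real.log_neg ht0 ht1
      linarith
    have hLlow : (n:ℝ)*A / (((n:ℝ)+1)*D) ≤ L t := by
      have hfrac : L t = (-Real.log (MInfty Φ t)) / (-Real.log t) := by
        rw [hLdef, neg_div_neg_eq]
      rw [hfrac]
      refine div_le_div₀ ?_ hXn hlogtpos hDn
      have := mul_nonneg (Nat.cast_nonneg (α := ℝ) n) hApos.le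
      linarith [hXn]
    have hfrac2 : (n:ℝ)*A/(((n:ℝ)+1)*D) = L t₀ * ((n:ℝ)/((n:ℝ)+1)) := by
      rw [hLt₀]
      have hn' : ((n:ℝ)+1) ≠ 0 := by positivity
      field_simp
    have hsplit : L t₀ * ((n:ℝ)/((n:ℝ)+1)) = L t₀ - L t₀/((n:ℝ)+1) := by
      have hn' : ((n:ℝ)+1) ≠ 0 := by positivity
      field_simp
      ring
    have htail : L t₀/((n:ℝ)+1) ≤ ε/2 := by
      have h4 : L t₀/((n:ℝ)+1) ≤ L t₀/((N:ℝ)+1) := by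
        apply div_le_div_of_nonneg_left hLt₀pos.le (by positivity)
        have : (N:ℝ) ≤ (n:ℝ) := by exact_mod_cast hnN.le
        linarith
      have h5 : L t₀/((N:ℝ)+1) ≤ ε/2 := by
        rw [div_le_iff₀ (by positivity : (0:ℝ) < (N:ℝ)+1)]
        rw [div_lt_iff₀ hε] at hN
        nlinarith
      linarith
    have hlow : S - ε < L t := by
      calc S - ε < L t₀ - ε/2 := by linarith
        _ ≤ L t₀ - L t₀/((n:ℝ)+1) := by linarith
        _ = L t₀ * ((n:ℝ)/((n:ℝ)+1)) := hsplit.symm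
        _ = (n:ℝ)*A/(((n:ℝ)+1)*D) := hfrac2.symm
        _ ≤ L t := hLlow
    rw [Real.dist_eq, abs_lt]
    constructor <;> linarith
  have halpha : alphaInfty Φ = S := by
    have : alphaInfty Φ = limUnder (nhdsWithin (0:ℝ) (Ioi 0)) L := rfl
    rw [this]
    exact htendsto.limUnder_eq
  rw [halpha] at hpα
  obtain ⟨x, ⟨t₀, ht₀mem, rfl⟩, hpx⟩ := exists_lt_of_lt_csSup hSne hpα
  have ht₀0 : 0 < t₀ := ht₀mem.1
  have ht₀1 : t₀ < 1 := lt_of_le_of_lt ht₀mem.2 one_half_lt_one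
  refine ⟨t₀, ht₀0, ht₀1, ?_⟩
  have hMt₀pos := hMpos t₀ ht₀0 ht₀1.le
  have hMlt : MInfty Φ t₀ < t₀ ^ p := by
    have hlt₀ : Real.log t₀ < 0 := Real.log_neg ht₀0 ht₀1
    have hlog : Real.log (MInfty Φ t₀) < p * Real.log t₀ := by
      rw [hLdef] at hpx
      rw [lt_div_iff_of_neg hlt₀] at hpx
      linarith
    have hpow : Real.log (t₀^p) = p * Real.log t₀ := Real.log_rpow ht₀0 p
    have := hlog
    rw [← hpow] at this
    exact (Real.log_lt_log_iff hMt₀pos (Real.rpow_pos_of_pos ht₀0 p)).1 this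
  have hev := eventually_lt_of_limsup_lt hMlt (hbdd t₀ ht₀0 ht₀1.le)
  rw [eventually_atTop] at hev
  obtain ⟨U, hU⟩ := hev
  refine ⟨max U 1, le_max_right _ _, fun u hu => ?_⟩
  have hu1 : (1:ℝ) ≤ u := le_trans (le_max_right _ _) hu
  have h := hU u (le_trans (le_max_left _ _) hu)
  rw [div_lt_iff₀ (young_pos hΦ (by linarith : (0:ℝ) < u))] at h
  linarith [h]


end GoodT0

section QI

lemma young_quasi_incr (Φ : ℝ → ℝ) (hΦ : IsNiceYoung Φ) {p t₀ U₀ : ℝ}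
    (hp0 : 0 < p) (ht₀ : 0 < t₀) (ht₁ : t₀ < 1) (hU : 1 ≤ U₀)
    (h : ∀ u, U₀ ≤ u → Φ (t₀*u) ≤ t₀^p * Φ u) :
    ∀ a b : ℝ, U₀ ≤ a → a ≤ b → Φ a / a ^ p ≤ (t₀^p)⁻¹ * (Φ b / b ^ p) := by
  classical
  intro a b ha hab
  have ha0 : (0:ℝ) < a := lt_of_lt_of_le (lt_of_lt_of_le one_pos hU) ha
  have hb0 : (0:ℝ) < b := lt_of_lt_of_le ha0 hab
  have htp : (0:ℝ) < t₀^p := Real.rpow_pos_of_pos ht₀ p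
  have hex : ∃ n:ℕ, t₀^(n+1) * b < a := by
    obtain ⟨n, hn⟩ := exists_pow_lt_of_lt_one (div_pos ha0 hb0) ht₁
    refine ⟨n, ?_⟩
    calc t₀^(n+1)*b ≤ t₀^n * b :=
          mul_le_mul_of_nonneg_right
            (pow_le_pow_of_le_one ht₀.le ht₁.le (Nat.le_succ n)) hb0.le
      _ < (a/b)*b := mul_lt_mul_of_pos_right hn hb0
      _ = a := div_mul_cancel₀ _ hb0.ne'
  set n := Nat.find hex with hndef
  have h1 : t₀^(n+1)*b < a := Nat.find_spec hex
  have h2 : a ≤ t₀^n * b := by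
    rcases Nat.eq_zero_or_pos n with h0 | h0
    · rw [h0, pow_zero, one_mul]; exact hab
    · have hmin := Nat.find_min hex (Nat.sub_lt h0 one_pos)
      push_neg at hmin
      have heq : n - 1 + 1 = n := by omega
      rwa [heq] at hmin
  have hstep : ∀ k:ℕ, k ≤ n → Φ (t₀^k * b) ≤ (t₀^p)^k * Φ b := by
    intro k
    induction k with
    | zero => intro _; simp
    | succ k ih =>
      intro hk
      have hk' : k ≤ n := Nat.le_of_succ_le hk
      have hkb : U₀ ≤ t₀^k * b := by
        calc U₀ ≤ a := ha
          _ ≤ t₀^n * b := h2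
          _ ≤ t₀^k * b := mul_le_mul_of_nonneg_right
              (pow_le_pow_of_le_one ht₀.le ht₁.le hk') hb0.le
      calc Φ (t₀^(k+1)*b) = Φ (t₀*(t₀^k*b)) := by
            rw [show t₀^(k+1)*b = t₀*(t₀^k*b) by ring]
        _ ≤ t₀^p * Φ (t₀^k*b) := h _ hkb
        _ ≤ t₀^p * ((t₀^p)^k * Φ b) := mul_le_mul_of_nonneg_left (ih hk') htp.le
        _ = (t₀^p)^(k+1) * Φ b := by ring
  have hΦa : Φ a ≤ (t₀^p)^n * Φ b := by
    have hm := young_mono hΦ (Set.mem_Ici.2 ha0.le)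
      (Set.mem_Ici.2 (mul_nonneg (pow_nonneg ht₀.le n) hb0.le)) h2
    exact hm.trans (hstep n (le_refl n))
  have hpowid : ∀ (m:ℕ), ((t₀^(m:ℕ) : ℝ)) ^ p = (t₀^p)^m := by
    intro m
    rw [← Real.rpow_natCast t₀ m, ← Real.rpow_natCast (t₀^p) m,
      ← Real.rpow_mul ht₀.le, ← Real.rpow_mul ht₀.le, mul_comm]
  have hap : (t₀^p)^(n+1) * b^p ≤ a^p := by
    have h3 : (t₀^(n+1)*b) ^ p ≤ a ^ p :=
      Real.rpow_le_rpow (by positivity) h1.le hp0.le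
    have h4 : (t₀^(n+1)*b)^p = (t₀^p)^(n+1) * b^p := by
      rw [Real.mul_rpow (by positivity) hb0.le, hpowid (n+1)]
    linarith [h3, h4 ▸ h3]
  have hbp : (0:ℝ) < b^p := Real.rpow_pos_of_pos hb0 p
  have hapos : (0:ℝ) < a^p := Real.rpow_pos_of_pos ha0 p
  have h5 : Φ a / a^p ≤ Φ a / ((t₀^p)^(n+1) * b^p) :=
    div_le_div_of_nonneg_left (young_nonneg hΦ ha0.le) (by positivity) hap
  have h6 : Φ a / ((t₀^p)^(n+1)*b^p) ≤ ((t₀^p)^n * Φ b)/((t₀^p)^(n+1)*b^p) :=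
    div_le_div_of_nonneg_right hΦa (by positivity)
  have h7 : ((t₀^p)^n * Φ b)/((t₀^p)^(n+1)*b^p) = (t₀^p)⁻¹ * (Φ b / b^p) := by
    rw [pow_succ]
    field_simp
  calc Φ a / a^p ≤ Φ a / ((t₀^p)^(n+1)*b^p) := h5
    _ ≤ ((t₀^p)^n * Φ b)/((t₀^p)^(n+1)*b^p) := h6
    _ = (t₀^p)⁻¹ * (Φ b / b^p) := h7

end QI

set_option maxHeartbeats 1000000 in
/-- for `Φ` nice Young, `Φ ∈ Δ₂` and `1 < p < α_Φ^∞`, there is an equivalent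
nice Young function `Φ̃ ∈ Δ₂` such that `u ↦ Φ̃(u^{1/p})` is convex on `[0,∞)`. -/
theorem exists_equiv_young_power_convex (Φ : ℝ → ℝ) (hΦ : IsNiceYoung Φ) (hΔ : Delta2 Φ)
    (p : ℝ) (hp : 1 < p) (hpα : p < alphaInfty Φ) :
    ∃ Φt : ℝ → ℝ, IsNiceYoung Φt ∧ YoungEquiv Φ Φt ∧ Delta2 Φt ∧
      ConvexOn ℝ (Set.Ici 0) (fun u : ℝ => Φt (u ^ (1 / p))) := by
  classical
  have hp0 : (0:ℝ) < p := by linarith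
  have hpne : p ≠ 0 := ne_of_gt hp0
  obtain ⟨t₀, ht₀0, ht₀1, U, hU1, hU₀⟩ := exists_good_t0 Φ hΦ hΔ hpα
  have hQI := young_quasi_incr Φ hΦ hp0 ht₀0 ht₀1 hU1 hU₀
  have htp : (0:ℝ) < t₀^p := Real.rpow_pos_of_pos ht₀0 p
  set C : ℝ := (t₀ ^ p)⁻¹ with hCdef
  have hC0 : 0 < C := by positivity
  have hC1 : (1:ℝ) ≤ C :=
    (one_le_inv_iff₀).2 ⟨htp, Real.rpow_le_one ht₀0.le ht₀1.le hp0.le⟩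
  have hU0 : (0:ℝ) < U := lt_of_lt_of_le one_pos hU1
  set V : ℝ := U ^ p with hVdef
  have hV1 : (1:ℝ) ≤ V := by
    rw [hVdef]
    calc (1:ℝ) = 1 ^ p := (Real.one_rpow p).symm
      _ ≤ U ^ p := Real.rpow_le_rpow zero_le_one hU1 hp0.le
  have hV0 : (0:ℝ) < V := by linarith
  have hVinv : V ^ (1/p) = U := by rw [hVdef, one_div, Real.rpow_rpow_inv hU0.le hpne]
  set c₀ : ℝ := Φ U / V with hc₀def
  have hΦU : 0 < Φ U := young_pos hΦ hU0
  have hc₀ : 0 < c₀ := div_pos hΦU hV0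
  set F : ℝ → ℝ := fun v => if v ≤ V then c₀ * v else Φ (v ^ (1/p)) with hFdef
  have hFval : ∀ v, F v = if v ≤ V then c₀ * v else Φ (v ^ (1/p)) := fun v => rfl
  have hFV : c₀ * V = Φ U := by rw [hc₀def]; field_simp
  have hFbig : ∀ v, V ≤ v → F v = Φ (v ^ (1/p)) := by
    intro v hv
    rw [hFval]
    by_cases h : v ≤ V
    · have hveq : v = V := le_antisymm h hv
      rw [if_pos h, hveq, hVinv, hFV]
    · rw [if_neg h]
  have hFsmall : ∀ v, v ≤ V → F v = c₀ * v := fun v hv => by rw [hFval, if_pos hv]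
  have hwp : ∀ w:ℝ, 0 ≤ w → (w ^ (1/p)) ^ p = w := fun w hw => by
    rw [one_div, Real.rpow_inv_rpow hw hpne]
  have hHQ : ∀ v w, 0 < v → v ≤ w → F v / v ≤ C * (F w / w) := by
    intro v w hv hvw
    have hw : (0:ℝ) < w := lt_of_lt_of_le hv hvw
    by_cases h2 : w ≤ V
    · rw [hFsmall v (hvw.trans h2), hFsmall w h2,
        mul_div_cancel_right₀ _ (ne_of_gt hv), mul_div_cancel_right₀ _ (ne_of_gt hw)]
      nlinarith
    · push_neg at h2
      have hUw : U ≤ w ^ (1/p) := by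
        rw [← hVinv]
        exact Real.rpow_le_rpow hV0.le h2.le (by positivity)
      by_cases h1 : v ≤ V
      · rw [hFsmall v h1, mul_div_cancel_right₀ _ (ne_of_gt hv), hFbig w h2.le]
        have hq := hQI U (w ^ (1/p)) (le_refl U) hUw
        rw [hwp w hw.le] at hq
        rw [hc₀def, hVdef]
        exact hq
      · push_neg at h1
        rw [hFbig v h1.le, hFbig w h2.le]
        have hUv : U ≤ v ^ (1/p) := by
          rw [← hVinv]
          exact Real.rpow_le_rpow hV0.le h1.le (by positivity)
        have hq := hQI (v ^ (1/p)) (w ^ (1/p)) hUv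
          (Real.rpow_le_rpow hv.le hvw (by positivity))
        rw [hwp w hw.le, hwp v hv.le] at hq
        exact hq
  -- the monotone density
  set ψ : ℝ → ℝ := fun v => if v ≤ 0 then c₀ else sSup ((fun s => F s / s) '' Ioc 0 v)
    with hψdef
  have hψval : ∀ v, ψ v = if v ≤ 0 then c₀ else sSup ((fun s => F s / s) '' Ioc 0 v) :=
    fun v => rfl
  have himg_ne : ∀ v:ℝ, 0 < v → ((fun s => F s / s) '' Ioc 0 v).Nonempty :=
    fun v hv => ⟨F v / v, v, ⟨hv, le_refl v⟩, rfl⟩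
  have himg_bdd : ∀ v:ℝ, 0 < v → BddAbove ((fun s => F s/s) '' Ioc 0 v) := by
    intro v hv
    refine ⟨C * (F v / v), ?_⟩
    rintro x ⟨s, hs, rfl⟩
    exact hHQ s v hs.1 hs.2
  have hψpos' : ∀ v:ℝ, 0 < v → ψ v = sSup ((fun s => F s / s) '' Ioc 0 v) := by
    intro v hv
    rw [hψval, if_neg (not_le.2 hv)]
  have hψ_ge : ∀ v:ℝ, 0 < v → F v / v ≤ ψ v := by
    intro v hv
    rw [hψpos' v hv]
    exact le_csSup (himg_bdd v hv) ⟨v, ⟨hv, le_refl v⟩, rfl⟩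
  have hψ_le : ∀ v:ℝ, 0 < v → ψ v ≤ C * (F v / v) := by
    intro v hv
    rw [hψpos' v hv]
    refine csSup_le (himg_ne v hv) ?_
    rintro x ⟨s, hs, rfl⟩
    exact hHQ s v hs.1 hs.2
  have hψ_lower : ∀ v:ℝ, c₀ ≤ ψ v := by
    intro v
    rcases le_or_gt v 0 with h | h
    · rw [hψval, if_pos h]
    · rw [hψpos' v h]
      have hmin0 : 0 < min v V := lt_min h hV0
      have hval : F (min v V) / (min v V) = c₀ := by
        rw [hFsmall _ (min_le_right v V), mul_div_cancel_right₀ _ (ne_of_gt hmin0)]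
      exact le_csSup (himg_bdd v h) ⟨min v V, ⟨hmin0, min_le_left _ _⟩, hval⟩
  have hψ_small : ∀ v:ℝ, 0 < v → v ≤ V → ψ v ≤ c₀ := by
    intro v hv hvV
    rw [hψpos' v hv]
    refine csSup_le (himg_ne v hv) ?_
    rintro x ⟨s, hs, rfl⟩
    show F s / s ≤ c₀
    rw [hFsmall s (hs.2.trans hvV), mul_div_cancel_right₀ _ (ne_of_gt hs.1)]
  have hψmono : Monotone ψ := by
    intro v w hvw
    rcases le_or_gt w 0 with hw | hw
    · have hv : v ≤ 0 := hvw.trans hw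
      rw [hψval v, hψval w, if_pos hv, if_pos hw]
    · rcases le_or_gt v 0 with hv | hv
      · have h1 : ψ v = c₀ := by rw [hψval, if_pos hv]
        rw [h1]
        exact hψ_lower w
      · rw [hψpos' v hv, hψpos' w hw]
        exact csSup_le_csSup (himg_bdd w hw) (himg_ne v hv)
          (Set.image_mono (Set.Ioc_subset_Ioc_right hvw))
  -- the primitive
  set G : ℝ → ℝ := fun v => ∫ t in (0:ℝ)..v, ψ t with hGdef
  have hGval : ∀ v, G v = ∫ t in (0:ℝ)..v, ψ t := fun v => rfl
  have hGconv : ConvexOn ℝ Set.univ G := primitive_convex hψmono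
  have hint : ∀ a b : ℝ, IntervalIntegrable ψ MeasureTheory.volume a b :=
    fun a b => hψmono.intervalIntegrable
  have hGcont : Continuous G := intervalIntegral.continuous_primitive hint 0
  have hGdiff : ∀ a b : ℝ, G b - G a = ∫ t in a..b, ψ t := by
    intro a b
    have := intervalIntegral.integral_add_adjacent_intervals (hint 0 a) (hint a b)
    rw [hGval, hGval]
    linarith [this]
  have hG0 : G 0 = 0 := intervalIntegral.integral_same
  have hGub2 : ∀ a b : ℝ, a ≤ b → G b - G a ≤ (b - a) * ψ b := by
    intro a b hab
    rw [hGdiff]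
    have := intervalIntegral.integral_mono_on hab (hint a b)
      (intervalIntegrable_const) (fun s hs => hψmono hs.2)
    simpa [smul_eq_mul] using this
  have hGlb2 : ∀ a b : ℝ, a ≤ b → (b - a) * ψ a ≤ G b - G a := by
    intro a b hab
    rw [hGdiff]
    have := intervalIntegral.integral_mono_on hab (intervalIntegrable_const)
      (hint a b) (fun s hs => hψmono hs.1)
    simpa [smul_eq_mul] using this
  have hGmono : Monotone G := by
    intro v w hvw
    have h1 := hGlb2 v w hvw
    nlinarith [hψ_lower v, hc₀, sub_nonneg.2 hvw]
  have hGpos : ∀ v:ℝ, 0 ≤ v → c₀ * v ≤ G v := by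
    intro v hv
    have h1 := hGlb2 0 v hv
    have hψ0 : ψ 0 = c₀ := by rw [hψval, if_pos (le_refl (0:ℝ))]
    rw [hG0, hψ0, sub_zero, sub_zero] at h1
    linarith [h1]
  have hGnn : ∀ v:ℝ, 0 ≤ v → 0 ≤ G v :=
    fun v hv => le_trans (mul_nonneg hc₀.le hv) (hGpos v hv)
  have hGub' : ∀ v:ℝ, 0 ≤ v → G v ≤ v * ψ v := by
    intro v hv
    have h1 := hGub2 0 v hv
    rw [hG0, sub_zero, sub_zero] at h1
    linarith [h1]
  have hGlow : ∀ v:ℝ, 0 < v → F (v/2) ≤ G v := by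
    intro v hv
    have h2 : (0:ℝ) < v/2 := by linarith
    have ha := hGlb2 (v/2) v (by linarith)
    have hb := hψ_ge (v/2) h2
    have hc' := hGpos (v/2) h2.le
    have hd : (v - v/2) = v/2 := by ring
    rw [hd] at ha
    have he : F (v/2) ≤ (v/2) * ψ (v/2) := by
      have h := mul_le_mul_of_nonneg_left hb h2.le
      rw [mul_comm (v/2) (F (v/2) / (v/2)), div_mul_cancel₀ _ (ne_of_gt h2)] at h
      exact h
    linarith [ha, he, hc', mul_nonneg hc₀.le h2.le]
  -- the candidate function
  set Φt : ℝ → ℝ := fun u => G (u ^ p) with hΦtdef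
  have hΦtval : ∀ u, Φt u = G (u ^ p) := fun u => rfl
  set u₀ : ℝ := (2*V) ^ (1/p) with hu₀def
  have h2V1 : (1:ℝ) ≤ 2*V := by linarith
  have hu₀1 : (1:ℝ) ≤ u₀ := by
    rw [hu₀def]
    calc (1:ℝ) = 1 ^ (1/p) := (Real.one_rpow _).symm
      _ ≤ (2*V) ^ (1/p) := Real.rpow_le_rpow zero_le_one h2V1 (by positivity)
  have hu₀p : ∀ u:ℝ, u₀ ≤ u → 2*V ≤ u ^ p := by
    intro u hu
    calc 2*V = ((2*V) ^ (1/p)) ^ p := (hwp _ (by linarith)).symm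
      _ ≤ u ^ p := Real.rpow_le_rpow (Real.rpow_nonneg (by linarith) _) hu hp0.le
  set c₁ : ℝ := (2:ℝ)⁻¹ ^ (1/p) with hc₁def
  have hc₁0 : 0 < c₁ := Real.rpow_pos_of_pos (by norm_num) _
  have hc₁1 : c₁ < 1 := Real.rpow_lt_one (by norm_num) (by norm_num) (by positivity)
  have hhalf : (1:ℝ)/2 < c₁ := by
    rw [hc₁def]
    have h := Real.rpow_lt_rpow_of_exponent_gt (x := (2:ℝ)⁻¹) (by norm_num) (by norm_num)
      (show 1/p < 1 by rw [div_lt_one hp0]; linarith)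
    rw [Real.rpow_one] at h
    calc (1:ℝ)/2 = (2:ℝ)⁻¹ := one_div 2
      _ < (2:ℝ)⁻¹ ^ (1/p) := h
  have hsplit : ∀ u:ℝ, 0 ≤ u → (u^p/2) ^ (1/p) = c₁ * u := by
    intro u hu
    rw [div_eq_mul_inv, Real.mul_rpow (Real.rpow_nonneg hu _) (by norm_num), hc₁def]
    rw [one_div, Real.rpow_rpow_inv hu hpne]
    ring
  have hlow : ∀ u:ℝ, u₀ ≤ u → Φ (c₁*u) ≤ Φt u := by
    intro u hu
    have hu1 : (1:ℝ) ≤ u := le_trans hu₀1 hu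
    have hu0 : (0:ℝ) < u := by linarith
    have hup : (0:ℝ) < u^p := Real.rpow_pos_of_pos hu0 p
    have h2V : 2*V ≤ u^p := hu₀p u hu
    have hVle : V ≤ u^p/2 := by linarith
    have h1 := hGlow (u^p) hup
    rw [hFbig _ hVle, hsplit u hu0.le] at h1
    rw [hΦtval]
    exact h1
  have hupp : ∀ u:ℝ, u₀ ≤ u → Φt u ≤ C * Φ u := by
    intro u hu
    have hu1 : (1:ℝ) ≤ u := le_trans hu₀1 hu
    have hu0 : (0:ℝ) < u := by linarith
    have hup : (0:ℝ) < u^p := Real.rpow_pos_of_pos hu0 p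
    have hVle : V ≤ u^p := by linarith [hu₀p u hu]
    have h1 := hGub' (u^p) hup.le
    have h2 := hψ_le (u^p) hup
    have h3 : F (u^p) = Φ u := by
      rw [hFbig _ hVle, one_div, Real.rpow_rpow_inv hu0.le hpne]
    rw [hΦtval]
    calc G (u^p) ≤ u^p * ψ (u^p) := h1
      _ ≤ u^p * (C * (F (u^p)/u^p)) := mul_le_mul_of_nonneg_left h2 hup.le
      _ = C * F (u^p) := by field_simp
      _ = C * Φ u := by rw [h3]
  -- nice Young properties of Φt
  have hΦtconv : ConvexOn ℝ (Ici 0) Φt := by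
    refine ⟨convex_Ici 0, ?_⟩
    intro x hx y hy a b ha hb hab
    simp only [smul_eq_mul, hΦtval]
    have hr := (convexOn_rpow hp.le).2 hx hy ha hb hab
    simp only [smul_eq_mul] at hr
    calc G ((a*x+b*y)^p) ≤ G (a*x^p + b*y^p) := hGmono hr
      _ ≤ a * G (x^p) + b * G (y^p) := by
          have h := hGconv.2 (Set.mem_univ (x^p)) (Set.mem_univ (y^p)) ha hb hab
          simpa [smul_eq_mul] using h
  have hΦt0 : Φt 0 = 0 := by rw [hΦtval, Real.zero_rpow hpne, hG0]
  have hrpcont : Continuous fun u:ℝ => u ^ p := by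
    rw [continuous_iff_continuousAt]
    intro x
    exact Real.continuousAt_rpow_const x p (Or.inr hp0.le)
  have hΦtcont : ContinuousOn Φt (Ici 0) := (hGcont.comp hrpcont).continuousOn
  have hΦtzero : ∀ u:ℝ, 0 ≤ u → (Φt u = 0 ↔ u = 0) := by
    intro u hu
    constructor
    · intro h
      by_contra hne
      have hu0 : 0 < u := lt_of_le_of_ne hu (Ne.symm hne)
      have hup : 0 < u^p := Real.rpow_pos_of_pos hu0 p
      rw [hΦtval] at h
      nlinarith [hGpos (u^p) hup.le, mul_pos hc₀ hup]
    · intro h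
      rw [h]
      exact hΦt0
  have hΦtsmall : Tendsto (fun u => Φt u / u) (nhdsWithin 0 (Ioi 0)) (nhds 0) := by
    have hVp : (0:ℝ) < V ^ (1/p) := Real.rpow_pos_of_pos hV0 _
    have hg : Tendsto (fun u:ℝ => c₀ * u^(p-1)) (nhdsWithin 0 (Ioi 0)) (nhds 0) := by
      have h1 : ContinuousAt (fun u:ℝ => u^(p-1)) 0 :=
        Real.continuousAt_rpow_const 0 (p-1) (Or.inr (by linarith))
      have h2 : Tendsto (fun u:ℝ => u^(p-1)) (nhdsWithin 0 (Ioi 0)) (nhds ((0:ℝ)^(p-1))) :=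
        (h1.tendsto).mono_left nhdsWithin_le_nhds
      rw [Real.zero_rpow (by intro hq; linarith [hq] : p - 1 ≠ 0)] at h2
      have h3 := h2.const_mul c₀
      simpa using h3
    refine squeeze_zero' ?_ ?_ hg
    · filter_upwards [self_mem_nhdsWithin] with u hu
      have hu0 : (0:ℝ) < u := hu
      refine div_nonneg ?_ hu0.le
      rw [hΦtval]
      exact hGnn _ (Real.rpow_pos_of_pos hu0 p).le
    · filter_upwards [Ioc_mem_nhdsGT_of_mem (Set.mem_Ico.2 ⟨le_refl (0:ℝ), hVp⟩)] with u hu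
      have hu0 : (0:ℝ) < u := hu.1
      have hup : (0:ℝ) < u^p := Real.rpow_pos_of_pos hu0 p
      have hupV : u^p ≤ V := by
        calc u^p ≤ (V^(1/p))^p := Real.rpow_le_rpow hu0.le hu.2 hp0.le
          _ = V := hwp V hV0.le
      have h1 : G (u^p) ≤ u^p * c₀ :=
        le_trans (hGub' (u^p) hup.le)
          (mul_le_mul_of_nonneg_left (hψ_small (u^p) hup hupV) hup.le)
      calc Φt u / u ≤ (u^p * c₀)/u := by
            rw [hΦtval]
            exact div_le_div_of_nonneg_right h1 hu0.le
        _ = c₀ * (u^p / u^(1:ℝ)) := by rw [Real.rpow_one]; ring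
        _ = c₀ * u^(p-1) := by rw [← Real.rpow_sub hu0]
  have hΦttop : Tendsto (fun u => Φt u / u) atTop atTop := by
    have h1 : Tendsto (fun u:ℝ => c₁ * u) atTop atTop :=
      tendsto_id.const_mul_atTop hc₁0
    have h2 : Tendsto (fun u:ℝ => Φ (c₁*u)/(c₁*u)) atTop atTop := (hΦ.2.2.2.2.2).comp h1
    have h3 : Tendsto (fun u:ℝ => c₁ * (Φ (c₁*u)/(c₁*u))) atTop atTop :=
      h2.const_mul_atTop hc₁0
    refine tendsto_atTop_mono' atTop ?_ h3
    filter_upwards [eventually_ge_atTop (max u₀ 1)] with u hu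
    have hu₀' : u₀ ≤ u := le_trans (le_max_left _ _) hu
    have hu1 : (1:ℝ) ≤ u := le_trans (le_max_right _ _) hu
    have hu0 : (0:ℝ) < u := by linarith
    have heq : c₁ * (Φ (c₁*u)/(c₁*u)) = Φ (c₁*u)/u := by
      field_simp
    show c₁ * (Φ (c₁*u)/(c₁*u)) ≤ Φt u / u
    rw [heq]
    exact div_le_div_of_nonneg_right (hlow u hu₀') hu0.le
  have hequiv : YoungEquiv Φ Φt := by
    refine ⟨c₁, C+1, u₀, hc₁0, by linarith, by linarith, ?_⟩
    intro u hu
    have hu1 : (1:ℝ) ≤ u := le_trans hu₀1 hu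
    have hu0 : (0:ℝ) ≤ u := by linarith
    refine ⟨hlow u hu, ?_⟩
    calc Φt u ≤ C * Φ u := hupp u hu
      _ ≤ Φ (C * u) := young_super hΦ hC1 hu0
      _ ≤ Φ ((C+1)*u) := young_mono hΦ (Set.mem_Ici.2 (mul_nonneg hC0.le hu0))
          (Set.mem_Ici.2 (by nlinarith)) (by nlinarith)
  obtain ⟨Kd, hKd0, u₁, hu₁0, hKdprop⟩ := hΔ
  have hΔt : Delta2 Φt := by
    refine ⟨C * (Kd^2 + 1), by positivity, max u₀ (u₁/c₁),
      le_trans (by linarith) (le_max_left _ _), ?_⟩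
    intro u hu
    have hu₀' : u₀ ≤ u := le_trans (le_max_left _ _) hu
    have hu1 : (1:ℝ) ≤ u := le_trans hu₀1 hu₀'
    have hu0 : (0:ℝ) < u := by linarith
    have hc₁u : u₁ ≤ c₁ * u := by
      have h := le_trans (le_max_right _ _) hu
      rw [div_le_iff₀ hc₁0] at h
      linarith [h]
    have h2u₀ : u₀ ≤ 2*u := by linarith
    have step1 : Φt (2*u) ≤ C * Φ (2*u) := hupp (2*u) h2u₀
    have step2 : Φ (2*u) ≤ Φ (2*(2*(c₁*u))) := by
      refine young_mono hΦ (Set.mem_Ici.2 (by linarith)) (Set.mem_Ici.2 (by nlinarith)) ?_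
      nlinarith [hhalf, hu0]
    have step3 : Φ (2*(2*(c₁*u))) ≤ Kd * Φ (2*(c₁*u)) := by
      refine hKdprop _ ?_
      nlinarith [hc₁u, mul_pos hc₁0 hu0]
    have step4 : Φ (2*(c₁*u)) ≤ Kd * Φ (c₁*u) := hKdprop _ hc₁u
    have step5 : Φ (c₁*u) ≤ Φt u := hlow u hu₀'
    have hΦtnn : 0 ≤ Φt u := by
      rw [hΦtval]
      exact hGnn _ (Real.rpow_pos_of_pos hu0 p).le
    have hΦc₁nn : 0 ≤ Φ (c₁*u) := young_nonneg hΦ (by positivity)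
    calc Φt (2*u) ≤ C * Φ (2*u) := step1
      _ ≤ C * (Kd * (Kd * Φ (c₁*u))) := by
          refine mul_le_mul_of_nonneg_left ?_ hC0.le
          calc Φ (2*u) ≤ Kd * Φ (2*(c₁*u)) := step2.trans step3
            _ ≤ Kd * (Kd * Φ (c₁*u)) := mul_le_mul_of_nonneg_left step4 hKd0.le
      _ ≤ C * (Kd * (Kd * Φt u)) := by
          refine mul_le_mul_of_nonneg_left ?_ hC0.le
          refine mul_le_mul_of_nonneg_left ?_ hKd0.le
          exact mul_le_mul_of_nonneg_left step5 hKd0.le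
      _ ≤ C * (Kd^2 + 1) * Φt u := by nlinarith [hΦtnn, hKd0, hC0]
  have hfinal : ConvexOn ℝ (Set.Ici 0) (fun u : ℝ => Φt (u ^ (1 / p))) := by
    refine ⟨convex_Ici 0, ?_⟩
    intro x hx y hy a b ha hb hab
    have hmem : a • x + b • y ∈ Ici (0:ℝ) := (convex_Ici 0) hx hy ha hb hab
    simp only [smul_eq_mul] at hmem ⊢
    have hid : ∀ z:ℝ, 0 ≤ z → Φt (z ^ (1/p)) = G z := by
      intro z hz
      rw [hΦtval, one_div, Real.rpow_inv_rpow hz hpne]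
    rw [hid _ hmem, hid _ hx, hid _ hy]
    have h := hGconv.2 (Set.mem_univ x) (Set.mem_univ y) ha hb hab
    simpa [smul_eq_mul] using h
  exact ⟨Φt, ⟨hΦtconv, hΦt0, hΦtcont, hΦtzero, hΦtsmall, hΦttop⟩, hequiv, hΔt, hfinal⟩
end

section
/- Let Φ₁ and Φ₂ be nice Young functions with Φ₁, Φ₂ ∈ Δ₂. If sup_{u ≥ 1} Φ₂(u)/Φ₁(u) = ∞, then sup_{u ≥ 1} Φ₁⁻¹(u)/Φ₂⁻¹(u) = ∞, where Φ₁⁻¹ and Φ₂⁻¹ are the inverse functions of Φ₁ and Φ₂. -/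
open Filter MeasureTheory Set Topology

namespace NiceAux

variable {Φ : ℝ → ℝ}

lemma chord (h : IsNiceYoung Φ) {a b : ℝ} (ha : 0 < a) (hab : a ≤ b) :
    Φ a ≤ (a / b) * Φ b := by
  have hb : 0 < b := lt_of_lt_of_le ha hab
  have h1 : a / b ≤ 1 := div_le_one_of_le₀ hab hb.le
  have h0 : (0:ℝ) ≤ a / b := div_nonneg ha.le hb.le
  have := h.1.2 (self_mem_Ici (a := (0:ℝ))) hb.le (show (0:ℝ) ≤ 1 - a/b by linarith) h0 (by ring)
  simp only [smul_eq_mul, mul_zero, zero_add] at this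
  rw [h.2.1] at this
  have hba : a / b * b = a := div_mul_cancel₀ a hb.ne'
  rw [hba] at this
  linarith

lemma nonneg (h : IsNiceYoung Φ) {u : ℝ} (hu : 0 ≤ u) : 0 ≤ Φ u := by
  rcases eq_or_lt_of_le hu with rfl | hu'
  · exact le_of_eq h.2.1.symm
  have hev : ∀ᶠ t in nhdsWithin (0:ℝ) (Ioi 0), Φ t / t ≤ Φ u / u := by
    have hmem : Ioc (0:ℝ) u ∈ nhdsWithin (0:ℝ) (Ioi 0) := by
      rw [← Ioi_inter_Iic]
      exact inter_mem_nhdsWithin _ (Iic_mem_nhds hu')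
    filter_upwards [hmem] with t ht
    have := chord h ht.1 ht.2
    rw [div_le_div_iff₀ ht.1 hu']
    calc Φ t * u ≤ (t / u * Φ u) * u := by nlinarith
      _ = Φ u * t := by field_simp
  have h0 : (0:ℝ) ≤ Φ u / u := le_of_tendsto h.2.2.2.2.1 hev
  have := mul_nonneg h0 hu'.le
  rwa [div_mul_cancel₀ _ hu'.ne'] at this

lemma pos (h : IsNiceYoung Φ) {u : ℝ} (hu : 0 < u) : 0 < Φ u := by
  rcases (nonneg h hu.le).lt_or_eq with h' | h'
  · exact h'
  · exact absurd (((h.2.2.2.1 u hu.le).mp h'.symm)) hu.ne'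

lemma mono (h : IsNiceYoung Φ) {a b : ℝ} (ha : 0 ≤ a) (hab : a ≤ b) : Φ a ≤ Φ b := by
  rcases eq_or_lt_of_le ha with rfl | ha'
  · rw [h.2.1]; exact nonneg h (le_trans ha hab)
  have hb : 0 < b := lt_of_lt_of_le ha' hab
  calc Φ a ≤ (a / b) * Φ b := chord h ha' hab
    _ ≤ 1 * Φ b := by
        have := nonneg h hb.le
        have : a / b ≤ 1 := div_le_one_of_le₀ hab hb.le
        nlinarith [nonneg h hb.le]
    _ = Φ b := one_mul _

lemma strictMono (h : IsNiceYoung Φ) {a b : ℝ} (ha : 0 ≤ a) (hab : a < b) : Φ a < Φ b := by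
  have hb : 0 < b := lt_of_le_of_lt ha hab
  have hΦb : 0 < Φ b := pos h hb
  rcases eq_or_lt_of_le ha with rfl | ha'
  · rwa [h.2.1]
  calc Φ a ≤ (a / b) * Φ b := chord h ha' hab.le
    _ < 1 * Φ b := by
        have : a / b < 1 := (div_lt_one hb).mpr hab
        nlinarith
    _ = Φ b := one_mul _

lemma unbdd (h : IsNiceYoung Φ) (w : ℝ) : ∃ v : ℝ, 0 ≤ v ∧ w ≤ Φ v := by
  obtain ⟨v, hv1, hvr⟩ := ((eventually_ge_atTop (1:ℝ)).and
    (h.2.2.2.2.2.eventually_ge_atTop (max w 1))).exists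
  have hv0 : 0 < v := lt_of_lt_of_le one_pos hv1
  refine ⟨v, hv0.le, ?_⟩
  have hnn : (0:ℝ) ≤ Φ v / v := le_trans (le_trans zero_le_one (le_max_right w 1)) hvr
  have : max w 1 * 1 ≤ (Φ v / v) * v := mul_le_mul hvr hv1 zero_le_one hnn
  rw [div_mul_cancel₀ _ hv0.ne'] at this
  calc w ≤ max w 1 := le_max_left _ _
    _ = max w 1 * 1 := (mul_one _).symm
    _ ≤ Φ v := this

lemma youngInv_le {w v : ℝ} (hv : 0 ≤ v) (hw : w ≤ Φ v) : youngInv Φ w ≤ v :=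
  csInf_le ⟨0, fun _ hx => hx.1⟩ ⟨hv, hw⟩

lemma youngInv_apply (h : IsNiceYoung Φ) {u : ℝ} (hu : 0 ≤ u) : youngInv Φ (Φ u) = u := by
  refine le_antisymm (youngInv_le hu le_rfl) (le_csInf ⟨u, hu, le_rfl⟩ ?_)
  rintro v ⟨hv0, hvΦ⟩
  by_contra hlt
  push_neg at hlt
  exact absurd hvΦ (not_le.mpr (strictMono h hv0 hlt))

lemma youngInv_pos (h : IsNiceYoung Φ) {w : ℝ} (hw : 1 ≤ w) : 0 < youngInv Φ w := by
  have h1 : ∀ᶠ t in nhdsWithin (0:ℝ) (Ioi 0), Φ t / t < 1 :=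
    h.2.2.2.2.1.eventually (eventually_lt_nhds one_pos)
  have h2 : ∀ᶠ t in nhdsWithin (0:ℝ) (Ioi 0), t < 1 := by
    filter_upwards [nhdsWithin_le_nhds (Iio_mem_nhds (show (0:ℝ) < 1 by norm_num))] with t ht
    exact ht
  have h3 : ∀ᶠ t in nhdsWithin (0:ℝ) (Ioi 0), t ∈ Ioi (0:ℝ) := eventually_mem_nhdsWithin
  obtain ⟨t, htr, ht1, ht0⟩ := (h1.and (h2.and h3)).exists
  have htΦ : Φ t < t := (div_lt_one ht0).mp htr
  obtain ⟨v₀, hv₀⟩ := unbdd h w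
  have hlb : ∀ v ∈ {v : ℝ | 0 ≤ v ∧ w ≤ Φ v}, t ≤ v := by
    rintro v ⟨hv0, hvw⟩
    by_contra hlt
    push_neg at hlt
    have : Φ v ≤ Φ t := mono h hv0 hlt.le
    linarith
  calc (0:ℝ) < t := ht0
    _ ≤ youngInv Φ w := le_csInf ⟨v₀, hv₀⟩ hlb

end NiceAux

namespace NiceAux

lemma delta2_pow {Φ : ℝ → ℝ} {K u₁ : ℝ} (hK : 0 < K) (hu₁ : 0 ≤ u₁)
    (hd : ∀ u : ℝ, u₁ ≤ u → Φ (2 * u) ≤ K * Φ u) :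
    ∀ m : ℕ, ∀ t : ℝ, u₁ ≤ t → Φ (2 ^ m * t) ≤ K ^ m * Φ t := by
  intro m
  induction m with
  | zero => intro t _; simp
  | succ n ih =>
    intro t ht
    have ht0 : 0 ≤ t := le_trans hu₁ ht
    have h2n : u₁ ≤ 2 ^ n * t :=
      le_trans ht (le_mul_of_one_le_left ht0 (one_le_pow₀ one_le_two))
    calc Φ (2 ^ (n + 1) * t) = Φ (2 * (2 ^ n * t)) := by ring_nf
      _ ≤ K * Φ (2 ^ n * t) := hd _ h2n
      _ ≤ K * (K ^ n * Φ t) := mul_le_mul_of_nonneg_left (ih t ht) hK.le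
      _ = K ^ (n + 1) * Φ t := by ring

end NiceAux

/-- for nice Young functions `Φ₁, Φ₂ ∈ Δ₂`,
if `sup_{u≥1} Φ₂(u)/Φ₁(u) = ∞` then `sup_{u≥1} Φ₁⁻¹(u)/Φ₂⁻¹(u) = ∞`. -/
theorem inverse_ratio_unbounded (Φ₁ Φ₂ : ℝ → ℝ)
    (h₁ : IsNiceYoung Φ₁) (h₂ : IsNiceYoung Φ₂)
    (hd₁ : Delta2 Φ₁) (hd₂ : Delta2 Φ₂)
    (h : ∀ B : ℝ, ∃ u : ℝ, 1 ≤ u ∧ B ≤ Φ₂ u / Φ₁ u) :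
    ∀ B : ℝ, ∃ u : ℝ, 1 ≤ u ∧ B ≤ youngInv Φ₁ u / youngInv Φ₂ u := by
  intro B
  set B' : ℝ := max B 2 with hB'def
  have hB'2 : (2:ℝ) ≤ B' := le_max_right _ _
  have hB'0 : (0:ℝ) < B' := by linarith
  obtain ⟨K, hK0, u₁, hu₁0, hKd⟩ := hd₂
  obtain ⟨m, hm⟩ : ∃ m : ℕ, B' ≤ 2 ^ m := by
    obtain ⟨m, hm⟩ := pow_unbounded_of_one_lt B' (one_lt_two (α := ℝ))
    exact ⟨m, hm.le⟩
  set C : ℝ := K ^ m with hCdef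
  have hC0 : (0:ℝ) < C := pow_pos hK0 m
  have h2m0 : (0:ℝ) < 2 ^ m := by positivity
  -- M₁ with Φ₁ M₁ ≥ 1
  obtain ⟨M₁, hM₁1, hM₁r⟩ := ((eventually_ge_atTop (1:ℝ)).and
    (h₁.2.2.2.2.2.eventually_ge_atTop 1)).exists
  have hM₁0 : (0:ℝ) < M₁ := lt_of_lt_of_le one_pos hM₁1
  have hM₁Φ : 1 ≤ Φ₁ M₁ := by
    have : 1 * M₁ ≤ Φ₁ M₁ := (le_div_iff₀ hM₁0).mp hM₁r
    linarith
  set M : ℝ := max (max (2 ^ m * u₁) M₁) 1 with hMdef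
  have hM1 : (1:ℝ) ≤ M := le_max_right _ _
  -- bound Φ₂ on [1, M]
  obtain ⟨D, hD⟩ := (isCompact_Icc (a := (1:ℝ)) (b := M)).exists_bound_of_continuousOn
    (h₂.2.2.1.mono (fun x hx => le_trans zero_le_one hx.1))
  have hD0 : (0:ℝ) ≤ D := le_trans (norm_nonneg _) (hD 1 ⟨le_refl 1, hM1⟩)
  have hΦ₁1 : (0:ℝ) < Φ₁ 1 := NiceAux.pos h₁ one_pos
  set R : ℝ := D / Φ₁ 1 with hRdef
  obtain ⟨u, hu1, hur⟩ := h (max (R + 1) C)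
  have hu0 : (0:ℝ) < u := lt_of_lt_of_le one_pos hu1
  have hΦ₁u : (0:ℝ) < Φ₁ u := NiceAux.pos h₁ hu0
  have huM : M < u := by
    by_contra hle
    push_neg at hle
    have h1' : Φ₂ u ≤ D := le_trans (le_abs_self _) (hD u ⟨hu1, hle⟩)
    have h2' : Φ₁ 1 ≤ Φ₁ u := NiceAux.mono h₁ zero_le_one hu1
    have h3' : Φ₂ u / Φ₁ u ≤ R := div_le_div₀ hD0 h1' hΦ₁1 h2'
    have h4' : R + 1 ≤ Φ₂ u / Φ₁ u := le_trans (le_max_left _ _) hur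
    linarith
  -- key inequalities
  have hw1 : 1 ≤ Φ₁ u :=
    le_trans hM₁Φ (NiceAux.mono h₁ hM₁0.le
      (le_trans (le_trans (le_max_right _ _) (le_max_left _ _)) huM.le))
  have hCΦ : C * Φ₁ u ≤ Φ₂ u := by
    have : C ≤ Φ₂ u / Φ₁ u := le_trans (le_max_right _ _) hur
    exact (le_div_iff₀ hΦ₁u).mp this
  have hu2m : u₁ ≤ u / 2 ^ m := by
    rw [le_div_iff₀ h2m0]
    calc u₁ * 2 ^ m = 2 ^ m * u₁ := by ring
      _ ≤ M := le_trans (le_max_left _ _) (le_max_left _ _)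
      _ ≤ u := huM.le
  have hiter : Φ₂ u ≤ C * Φ₂ (u / 2 ^ m) := by
    have := NiceAux.delta2_pow hK0 hu₁0 hKd m (u / 2 ^ m) hu2m
    rwa [mul_div_cancel₀ u h2m0.ne'] at this
  have hdivle : u / 2 ^ m ≤ u / B' := by gcongr
  have hmono2 : Φ₂ (u / 2 ^ m) ≤ Φ₂ (u / B') :=
    NiceAux.mono h₂ (div_nonneg hu0.le h2m0.le) hdivle
  have hkey : Φ₁ u ≤ Φ₂ (u / B') := by
    have : C * Φ₁ u ≤ C * Φ₂ (u / B') := by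
      calc C * Φ₁ u ≤ Φ₂ u := hCΦ
        _ ≤ C * Φ₂ (u / 2 ^ m) := hiter
        _ ≤ C * Φ₂ (u / B') := mul_le_mul_of_nonneg_left hmono2 hC0.le
    exact le_of_mul_le_mul_left this hC0
  -- conclude
  refine ⟨Φ₁ u, hw1, ?_⟩
  have hinv1 : youngInv Φ₁ (Φ₁ u) = u := NiceAux.youngInv_apply h₁ hu0.le
  have hv_le : youngInv Φ₂ (Φ₁ u) ≤ u / B' :=
    NiceAux.youngInv_le (div_nonneg hu0.le hB'0.le) hkey
  have hv_pos : 0 < youngInv Φ₂ (Φ₁ u) := NiceAux.youngInv_pos h₂ hw1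
  rw [hinv1]
  have hBu : B' * youngInv Φ₂ (Φ₁ u) ≤ u := by
    have := (le_div_iff₀ hB'0).mp hv_le
    linarith [this, mul_comm B' (youngInv Φ₂ (Φ₁ u))]
  calc B ≤ B' := le_max_left _ _
    _ ≤ u / youngInv Φ₂ (Φ₁ u) := (le_div_iff₀ hv_pos).mpr (by linarith)
end
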